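/- arXiv:2004.03853 — 5 statements merged into one kernel-verified Lean document; each statement's English description precedes it below -/
import Mathlib

section
/- Let g_1, …, g_s be polynomials in n real variables and let Ω = {x ∈ ℝ^n : g_1(x) ≥ 0, …, g_s(x) ≥ 0}. Assume the quadratic module generated by g_1, …, g_s is Archimedean, i.e., there exist N ∈ ℕ and sum-of-squares polynomials σ_0, σ_1, …, σ_s such that N − (x_1² + … + x_n²) = σ_0(x) + σ_1(x)g_1(x) + … + σ_s(x)g_s(x). If a polynomial p satisfies p(x) > 0 for all x ∈ Ω, then there exist sum-of-squares polynomials s_0, s_1, …, s_s such that p(x) = s_0(x) + s_1(x)g_1(x) + … + s_s(x)g_s(x). -/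
open MvPolynomial

/-- A polynomial in `n` real variables is a sum of squares if it is a finite sum of
squares of polynomials. -/
def IsSOS {n : ℕ} (p : MvPolynomial (Fin n) ℝ) : Prop :=
  ∃ (r : ℕ) (q : Fin r → MvPolynomial (Fin n) ℝ), p = ∑ i, (q i) ^ 2

/-!
Putinar's theorem is Jacobi's representation theorem for the quadratic module `M` generated by
the `g i` in `A = ℝ[X₁, …, Xₙ]`: in an Archimedean quadratic module `M` of a commutative
`ℝ`-algebra `A`, every `a` with `φ a > 0` for all `ℝ`-algebra homomorphisms `φ : A → ℝ` that are
nonnegative on `M` lies in `M`. (`M` is Archimedean as soon as `N - ∑ Xᵢ²` lies in it, because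
the bounded elements form a subalgebra.)

Either `-1 ∈ M - a·ΣA²`, i.e. `σa - 1 ∈ M` for a sum of squares `σ`: then a descent, which turns
`a + m ∈ M` into `a + (m - l) ∈ M` for a fixed `l > 0` using Archimedean bounds on `σ`, `σ²` and
`σ(σa - 1)`, reaches `m < 0`, so `a ∈ M`. Or `M - a·ΣA²` is proper: by Zorn it lies in a maximal
proper quadratic module `Q`, which is total and still Archimedean, and
`φ b = inf {r | r - b ∈ Q}` is then an `ℝ`-algebra homomorphism, nonnegative on `M`, with
`φ a ≤ 0`. On polynomials `φ` is evaluation at the point `(φ Xᵢ)ᵢ`, which lies in `Ω`.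
-/

open scoped algebraMap

@[simp, norm_cast]
theorem algebraMap.coe_ofNat {R A : Type*} [CommSemiring R] [Semiring A] [Algebra R A] (n : ℕ)
    [n.AtLeastTwo] : ((ofNat(n) : R) : A) = ofNat(n) :=
  map_ofNat (algebraMap R A) n

structure IsQuadraticModule {A : Type*} [CommRing A] (M : Set A) : Prop where
  one_mem : 1 ∈ M
  add_mem {a b : A} : a ∈ M → b ∈ M → a + b ∈ M
  sq_mul_mem (q : A) {a : A} : a ∈ M → q ^ 2 * a ∈ M

namespace QuadraticModule

variable {A : Type*} [CommRing A]

/-- `M + b · ΣA²`, the quadratic module generated by `M` and `b`. -/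
def adjoin (M : Set A) (b : A) : Set A :=
  {a | ∃ m ∈ M, ∃ s, IsSumSq s ∧ a = m + s * b}

def span {ι : Type*} [Fintype ι] (g : ι → A) : Set A :=
  {a | ∃ (s₀ : A) (s : ι → A), IsSumSq s₀ ∧ (∀ i, IsSumSq (s i)) ∧ a = s₀ + ∑ i, s i * g i}

def IsArchimedean [Algebra ℝ A] (M : Set A) : Prop :=
  ∀ a : A, ∃ r : ℝ, (r : A) - a ∈ M

end QuadraticModule

open QuadraticModule

namespace IsQuadraticModule

variable {A : Type*} [CommRing A] {M : Set A}

theorem zero_mem (hM : IsQuadraticModule M) : 0 ∈ M := by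
  simpa using hM.sq_mul_mem 0 hM.one_mem

theorem isSumSq_mul_mem (hM : IsQuadraticModule M) {s a : A} (hs : IsSumSq s) (ha : a ∈ M) :
    s * a ∈ M := by
  induction hs with
  | zero => simpa using hM.zero_mem
  | sq_add q _ ih => simpa [add_mul, sq] using hM.add_mem (hM.sq_mul_mem q ha) ih

theorem isSumSq_mem (hM : IsQuadraticModule M) {s : A} (hs : IsSumSq s) : s ∈ M := by
  simpa using hM.isSumSq_mul_mem hs hM.one_mem

theorem sq_mem (hM : IsQuadraticModule M) (q : A) : q ^ 2 ∈ M := by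
  simpa using hM.sq_mul_mem q hM.one_mem

theorem sUnion {c : Set (Set A)} (hc : IsChain (· ⊆ ·) c) (hne : c.Nonempty)
    (h : ∀ Q ∈ c, IsQuadraticModule Q) : IsQuadraticModule (⋃₀ c) where
  one_mem := let ⟨Q, hQ⟩ := hne; ⟨Q, hQ, (h Q hQ).one_mem⟩
  add_mem := by
    rintro a b ⟨Q, hQ, ha⟩ ⟨Q', hQ', hb⟩
    rcases hc.total hQ hQ' with hQQ' | hQ'Q
    · exact ⟨Q', hQ', (h Q' hQ').add_mem (hQQ' ha) hb⟩
    · exact ⟨Q, hQ, (h Q hQ).add_mem ha (hQ'Q hb)⟩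
  sq_mul_mem q := by
    rintro a ⟨Q, hQ, ha⟩
    exact ⟨Q, hQ, (h Q hQ).sq_mul_mem q ha⟩

theorem adjoin (hM : IsQuadraticModule M) (b : A) : IsQuadraticModule (adjoin M b) where
  one_mem := ⟨1, hM.one_mem, 0, .zero, by simp⟩
  add_mem := by
    rintro _ _ ⟨m, hm, s, hs, rfl⟩ ⟨m', hm', s', hs', rfl⟩
    exact ⟨m + m', hM.add_mem hm hm', s + s', hs.add hs', by ring⟩
  sq_mul_mem q := by
    rintro _ ⟨m, hm, s, hs, rfl⟩
    exact ⟨q ^ 2 * m, hM.sq_mul_mem q hm, q ^ 2 * s, (IsSquare.sq q).isSumSq.mul hs, by ring⟩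

theorem subset_adjoin (b : A) : M ⊆ QuadraticModule.adjoin M b :=
  fun a ha => ⟨a, ha, 0, .zero, by simp⟩

theorem mem_adjoin_self (hM : IsQuadraticModule M) (b : A) : b ∈ QuadraticModule.adjoin M b :=
  ⟨0, hM.zero_mem, 1, .one, by simp⟩

end IsQuadraticModule

namespace QuadraticModule

variable {A : Type*} [CommRing A] {ι : Type*} [Fintype ι]

theorem isQuadraticModule_span (g : ι → A) : IsQuadraticModule (span g) where
  one_mem := ⟨1, 0, .one, fun _ => .zero, by simp⟩
  add_mem := by
    rintro _ _ ⟨s₀, s, hs₀, hs, rfl⟩ ⟨t₀, t, ht₀, ht, rfl⟩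
    refine ⟨s₀ + t₀, s + t, hs₀.add ht₀, fun i => (hs i).add (ht i), ?_⟩
    simp only [Pi.add_apply, add_mul, Finset.sum_add_distrib]
    ring
  sq_mul_mem q := by
    rintro _ ⟨s₀, s, hs₀, hs, rfl⟩
    refine ⟨q ^ 2 * s₀, fun i => q ^ 2 * s i, (IsSquare.sq q).isSumSq.mul hs₀,
      fun i => (IsSquare.sq q).isSumSq.mul (hs i), ?_⟩
    simp only [mul_add, Finset.mul_sum, mul_assoc]

theorem mem_span (g : ι → A) (i : ι) : g i ∈ span g := by
  classical
  refine ⟨0, Pi.single i 1, .zero, fun j => ?_, by simp [Pi.single_apply]⟩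
  by_cases hj : j = i <;> simp [hj]

end QuadraticModule

namespace IsQuadraticModule

variable {A : Type*} [CommRing A] [Algebra ℝ A] {M : Set A}

theorem algebraMap_mul_mem (hM : IsQuadraticModule M) {r : ℝ} (hr : 0 ≤ r) {a : A}
    (ha : a ∈ M) : (r : A) * a ∈ M := by
  have hsq : (r : A) = ((√r : ℝ) : A) ^ 2 := by rw [← algebraMap.coe_pow, Real.sq_sqrt hr]
  exact hsq ▸ hM.sq_mul_mem _ ha

theorem algebraMap_mem (hM : IsQuadraticModule M) {r : ℝ} (hr : 0 ≤ r) : (r : A) ∈ M := by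
  simpa using hM.algebraMap_mul_mem hr hM.one_mem

theorem mem_of_algebraMap_mul_mem (hM : IsQuadraticModule M) {r : ℝ} (hr : 0 < r) {a : A}
    (h : (r : A) * a ∈ M) : a ∈ M := by
  have := hM.algebraMap_mul_mem (inv_nonneg.2 hr.le) h
  rwa [← mul_assoc, ← algebraMap.coe_mul, inv_mul_cancel₀ hr.ne', algebraMap.coe_one,
    one_mul] at this

theorem add_algebraMap_mem_of_le (hM : IsQuadraticModule M) {a : A} {r r' : ℝ}
    (h : a + (r : A) ∈ M) (hr : r ≤ r') : a + (r' : A) ∈ M := by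
  convert hM.add_mem h (hM.algebraMap_mem (sub_nonneg.2 hr)) using 1
  push_cast
  ring

theorem algebraMap_sub_mem_of_le (hM : IsQuadraticModule M) {a : A} {r r' : ℝ}
    (h : (r : A) - a ∈ M) (hr : r ≤ r') : (r' : A) - a ∈ M := by
  convert hM.add_mem h (hM.algebraMap_mem (sub_nonneg.2 hr)) using 1
  push_cast
  ring

theorem nonneg_of_algebraMap_mem (hM : IsQuadraticModule M) (hM₁ : -1 ∉ M) {r : ℝ}
    (h : (r : A) ∈ M) : 0 ≤ r := by
  by_contra! hr
  refine hM₁ (hM.mem_of_algebraMap_mul_mem (neg_pos.2 hr) ?_)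
  convert h using 1
  push_cast
  ring

theorem sq_sub_sq_mem (hM : IsQuadraticModule M) {a : A} {d : ℝ} (hd : 0 < d)
    (h₁ : (d : A) - a ∈ M) (h₂ : (d : A) + a ∈ M) : (d : A) ^ 2 - a ^ 2 ∈ M := by
  refine hM.mem_of_algebraMap_mul_mem (r := 2 * d) (by positivity) ?_
  convert hM.add_mem (hM.sq_mul_mem ((d : A) + a) h₁) (hM.sq_mul_mem ((d : A) - a) h₂) using 1
  push_cast
  ring

theorem exists_algebraMap_sub_sq_mem (hM : IsQuadraticModule M) {a : A} {r r' : ℝ}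
    (h : (r : A) - a ∈ M) (h' : (r' : A) + a ∈ M) : ∃ R : ℝ, (R : A) - a ^ 2 ∈ M := by
  have hd : 0 < |r| + |r'| + 1 := by positivity
  refine ⟨(|r| + |r'| + 1) ^ 2, ?_⟩
  rw [algebraMap.coe_pow]
  refine hM.sq_sub_sq_mem hd (hM.algebraMap_sub_mem_of_le h ?_) ?_
  · linarith [le_abs_self r, abs_nonneg r']
  · rw [add_comm] at h' ⊢
    exact hM.add_algebraMap_mem_of_le h' (by linarith [le_abs_self r', abs_nonneg r])

def boundedSubalgebra (hM : IsQuadraticModule M) : Subalgebra ℝ A where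
  carrier := {a | (∃ r : ℝ, (r : A) - a ∈ M) ∧ ∃ r : ℝ, (r : A) + a ∈ M}
  add_mem' := by
    rintro a b ⟨⟨r, har⟩, r', har'⟩ ⟨⟨s, hbs⟩, s', hbs'⟩
    refine ⟨⟨r + s, ?_⟩, r' + s', ?_⟩
    · convert hM.add_mem har hbs using 1; push_cast; ring
    · convert hM.add_mem har' hbs' using 1; push_cast; ring
  mul_mem' := by
    -- `4ab = (a + b)² - (a - b)²`, and squares of bounded elements are bounded.
    rintro a b ⟨⟨r, har⟩, r', har'⟩ ⟨⟨s, hbs⟩, s', hbs'⟩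
    obtain ⟨R, hR⟩ := hM.exists_algebraMap_sub_sq_mem (a := a + b) (r := r + s) (r' := r' + s')
      (by convert hM.add_mem har hbs using 1; push_cast; ring)
      (by convert hM.add_mem har' hbs' using 1; push_cast; ring)
    obtain ⟨R', hR'⟩ := hM.exists_algebraMap_sub_sq_mem (a := a - b) (r := r + s') (r' := r' + s)
      (by convert hM.add_mem har hbs' using 1; push_cast; ring)
      (by convert hM.add_mem har' hbs using 1; push_cast; ring)
    refine ⟨⟨|R|, hM.mem_of_algebraMap_mul_mem (r := 4) (by norm_num) ?_⟩,
      |R'|, hM.mem_of_algebraMap_mul_mem (r := 4) (by norm_num) ?_⟩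
    · convert hM.add_mem (hM.add_mem hR (hM.sq_mem (a - b)))
        (hM.algebraMap_mem (r := 4 * |R| - R) (by linarith [le_abs_self R, abs_nonneg R]))
        using 1
      push_cast; ring
    · convert hM.add_mem (hM.add_mem hR' (hM.sq_mem (a + b)))
        (hM.algebraMap_mem (r := 4 * |R'| - R') (by linarith [le_abs_self R', abs_nonneg R']))
        using 1
      push_cast; ring
  algebraMap_mem' r := ⟨⟨r, by simpa using hM.zero_mem⟩, -r, by simpa using hM.zero_mem⟩

theorem mem_boundedSubalgebra_of_algebraMap_sub_sq_mem (hM : IsQuadraticModule M) {a : A} {R : ℝ}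
    (h : (R : A) - a ^ 2 ∈ M) : a ∈ hM.boundedSubalgebra := by
  have hR : 0 ≤ 2 * |R| + 1 - R := by linarith [le_abs_self R, abs_nonneg R]
  refine ⟨⟨|R| + 1, hM.mem_of_algebraMap_mul_mem (r := 2) (by norm_num) ?_⟩,
    |R| + 1, hM.mem_of_algebraMap_mul_mem (r := 2) (by norm_num) ?_⟩
  · convert hM.add_mem (hM.add_mem h (hM.sq_mem (a - 1))) (hM.algebraMap_mem hR) using 1
    push_cast; ring
  · convert hM.add_mem (hM.add_mem h (hM.sq_mem (a + 1))) (hM.algebraMap_mem hR) using 1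
    push_cast; ring

theorem isArchimedean_of_adjoin_eq_top (hM : IsQuadraticModule M) {S : Set A}
    (hS : Algebra.adjoin ℝ S = ⊤) (h : ∀ s ∈ S, ∃ R : ℝ, (R : A) - s ^ 2 ∈ M) :
    IsArchimedean M := by
  have htop : hM.boundedSubalgebra = ⊤ := by
    refine top_le_iff.1 (hS ▸ Algebra.adjoin_le fun s hs => ?_)
    obtain ⟨R, hR⟩ := h s hs
    exact hM.mem_boundedSubalgebra_of_algebraMap_sub_sq_mem hR
  intro a
  exact (htop ▸ Algebra.mem_top : a ∈ hM.boundedSubalgebra).1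

theorem isArchimedean_of_algebraMap_sub_sum_sq_mem (hM : IsQuadraticModule M) {ι : Type*}
    [Fintype ι] {f : ι → A} (hf : Algebra.adjoin ℝ (Set.range f) = ⊤) {R : ℝ}
    (h : (R : A) - ∑ i, f i ^ 2 ∈ M) : IsArchimedean M := by
  classical
  refine hM.isArchimedean_of_adjoin_eq_top hf ?_
  rintro _ ⟨i, rfl⟩
  refine ⟨R, ?_⟩
  convert hM.add_mem h (hM.isSumSq_mem (IsSumSq.sum_sq (Finset.univ.erase i) f)) using 1
  rw [← Finset.add_sum_erase _ _ (Finset.mem_univ i)]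
  ring

end IsQuadraticModule

theorem IsUpperSet.zero_mem_of_forall_sub_mem {S : Set ℝ} (hS : IsUpperSet S) {l b : ℝ}
    (hl : 0 < l) (hstep : ∀ x ∈ S, 0 ≤ x → x ≤ b → x - l ∈ S) (hb : b ∈ S) : 0 ∈ S := by
  suffices ∀ j : ℕ, ∀ x ∈ S, x ≤ b → x < j * l → 0 ∈ S by
    obtain ⟨j, hj⟩ := exists_nat_gt (b / l)
    exact this j b hb le_rfl (by rwa [div_lt_iff₀ hl] at hj)
  intro j
  induction j with
  | zero => exact fun x hx _ hxl => hS (by simpa using hxl.le) hx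
  | succ j ih =>
    intro x hx hxb hxl
    rcases lt_or_ge x 0 with hx₀ | hx₀
    · exact hS hx₀.le hx
    · exact ih (x - l) (hstep x hx hx₀ hxb) (by linarith) (by push_cast at hxl; linarith)

namespace QuadraticModule.IsArchimedean

variable {A : Type*} [CommRing A] [Algebra ℝ A] {M : Set A}

theorem mono {N : Set A} (h : IsArchimedean M) (hMN : M ⊆ N) : IsArchimedean N :=
  fun a => let ⟨r, hr⟩ := h a; ⟨r, hMN hr⟩

theorem exists_nonneg (h : IsArchimedean M) (hM : IsQuadraticModule M) (a : A) :
    ∃ r : ℝ, 0 ≤ r ∧ (r : A) - a ∈ M :=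
  let ⟨r, hr⟩ := h a
  ⟨max r 0, le_max_right r 0, hM.algebraMap_sub_mem_of_le hr (le_max_left r 0)⟩

end QuadraticModule.IsArchimedean

namespace IsQuadraticModule

variable {A : Type*} [CommRing A] [Algebra ℝ A] {M : Set A}

/-- Multiplying `c + m` by `(1 - lσ)²` and correcting with the bounds `k`, `K`, `L` on `σ`, `σ²`
and `σ(σc - 1)` lowers the constant `m` by `2l - O(l²)`. -/
theorem add_algebraMap_descent (hM : IsQuadraticModule M) {σ c : A} (hσ : IsSumSq σ)
    (hc : σ * c - 1 ∈ M) {k K L m l : ℝ} (hk : (k : A) - σ ∈ M) (hK : (K : A) - σ ^ 2 ∈ M)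
    (hL : (L : A) - σ * (σ * c - 1) ∈ M) (hm : 0 ≤ m) (hl : 0 ≤ l) (hcm : c + (m : A) ∈ M) :
    c + ((m - 2 * l + l ^ 2 * (m * K + k + L) : ℝ) : A) ∈ M := by
  have key : c + ((m - 2 * l + l ^ 2 * (m * K + k + L) : ℝ) : A) =
      (1 - l * σ) ^ 2 * (c + m)
        + (m : A) * (((2 * l : ℝ) : A) * σ + ((l ^ 2 : ℝ) : A) * (K - σ ^ 2))
        + ((2 * l : ℝ) : A) * (σ * c - 1) + ((l ^ 2 : ℝ) : A) * (k - σ)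
        + ((l ^ 2 : ℝ) : A) * (L - σ * (σ * c - 1)) := by
    push_cast
    ring
  rw [key]
  refine hM.add_mem (hM.add_mem (hM.add_mem (hM.add_mem (hM.sq_mul_mem _ hcm) ?_) ?_) ?_) ?_
  · exact hM.algebraMap_mul_mem hm (hM.add_mem
      (hM.algebraMap_mul_mem (by positivity) (hM.isSumSq_mem hσ))
      (hM.algebraMap_mul_mem (by positivity) hK))
  · exact hM.algebraMap_mul_mem (by positivity) hc
  · exact hM.algebraMap_mul_mem (by positivity) hk
  · exact hM.algebraMap_mul_mem (by positivity) hL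

theorem mem_of_isSumSq_mul_sub_one_mem (hM : IsQuadraticModule M) (hArch : IsArchimedean M)
    {σ c : A} (hσ : IsSumSq σ) (hc : σ * c - 1 ∈ M) : c ∈ M := by
  obtain ⟨k, hk₀, hk⟩ := hArch.exists_nonneg hM σ
  obtain ⟨K, hK₀, hK⟩ := hArch.exists_nonneg hM (σ ^ 2)
  obtain ⟨L, hL₀, hL⟩ := hArch.exists_nonneg hM (σ * (σ * c - 1))
  obtain ⟨b, hb₀, hb⟩ := hArch.exists_nonneg hM (-c)
  set l := (b * K + k + L + 1)⁻¹
  have hl : 0 < l := by positivity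
  have hS : IsUpperSet {m : ℝ | c + (m : A) ∈ M} :=
    fun x y hxy hx => hM.add_algebraMap_mem_of_le hx hxy
  have hstep (m : ℝ) (hcm : c + (m : A) ∈ M) (hm : 0 ≤ m) (hmb : m ≤ b) :
      c + ((m - l : ℝ) : A) ∈ M := by
    refine hM.add_algebraMap_mem_of_le (hM.add_algebraMap_descent hσ hc hk hK hL hm hl.le hcm) ?_
    have hB : m * K + k + L ≤ l⁻¹ := by rw [inv_inv]; nlinarith
    have : l ^ 2 * (m * K + k + L) ≤ l := by
      calc l ^ 2 * (m * K + k + L) ≤ l ^ 2 * l⁻¹ := by gcongr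
        _ = l := by field_simp
    linarith
  simpa using hS.zero_mem_of_forall_sub_mem hl hstep (by simpa [add_comm] using hb)

end IsQuadraticModule

/-- `t` is the real number that `a` equals with respect to the ordering `Q`: the Dedekind cut
of `a`. -/
def QuadraticModule.IsCut {A : Type*} [CommRing A] [Algebra ℝ A] (Q : Set A) (a : A) (t : ℝ) :
    Prop :=
  (∀ r, t < r → (r : A) - a ∈ Q) ∧ ∀ r, r < t → a - (r : A) ∈ Q

structure IsProperTotalArchimedean {A : Type*} [CommRing A] [Algebra ℝ A] (Q : Set A) : Prop
    extends IsQuadraticModule Q where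
  neg_one_notMem : -1 ∉ Q
  mem_or_neg_mem (a : A) : a ∈ Q ∨ -a ∈ Q
  isArchimedean : IsArchimedean Q

namespace QuadraticModule.IsCut

variable {A : Type*} [CommRing A] [Algebra ℝ A] {Q : Set A} {a b : A} {t u : ℝ}

theorem algebraMap (hQ : IsQuadraticModule Q) (r : ℝ) : IsCut Q (r : A) r := by
  refine ⟨fun s hs => ?_, fun s hs => ?_⟩ <;>
  · rw [← algebraMap.coe_sub]
    exact hQ.algebraMap_mem (by linarith)

theorem neg (h : IsCut Q a t) : IsCut Q (-a) (-t) := by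
  refine ⟨fun r hr => ?_, fun r hr => ?_⟩
  · simpa [sub_eq_add_neg, add_comm] using h.2 (-r) (by linarith)
  · simpa [sub_eq_add_neg, add_comm] using h.1 (-r) (by linarith)

theorem add (hQ : IsQuadraticModule Q) (ha : IsCut Q a t) (hb : IsCut Q b u) :
    IsCut Q (a + b) (t + u) := by
  refine ⟨fun r hr => ?_, fun r hr => ?_⟩
  · obtain ⟨e, he, rfl⟩ : ∃ e, 0 < e ∧ r = t + u + 2 * e := ⟨(r - t - u) / 2, by linarith, by ring⟩
    convert hQ.add_mem (ha.1 (t + e) (by linarith)) (hb.1 (u + e) (by linarith)) using 1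
    push_cast; ring
  · obtain ⟨e, he, rfl⟩ : ∃ e, 0 < e ∧ r = t + u - 2 * e := ⟨(t + u - r) / 2, by linarith, by ring⟩
    convert hQ.add_mem (ha.2 (t - e) (by linarith)) (hb.2 (u - e) (by linarith)) using 1
    push_cast; ring

theorem of_algebraMap_mul (hQ : IsQuadraticModule Q) {r : ℝ} (hr : 0 < r)
    (h : IsCut Q ((r : A) * a) (r * t)) : IsCut Q a t := by
  refine ⟨fun s hs => hQ.mem_of_algebraMap_mul_mem hr ?_,
    fun s hs => hQ.mem_of_algebraMap_mul_mem hr ?_⟩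
  · convert h.1 (r * s) (by gcongr) using 1; push_cast; ring
  · convert h.2 (r * s) (by gcongr) using 1; push_cast; ring

theorem sq (hQ : IsQuadraticModule Q) (h : IsCut Q a t) : IsCut Q (a ^ 2) (t ^ 2) := by
  wlog ht : 0 ≤ t generalizing a t
  · simpa only [neg_sq] using this h.neg (by linarith)
  refine ⟨fun r hr => ?_, fun r hr => ?_⟩
  · have hd : t < √r := Real.lt_sqrt_of_sq_lt hr
    have := hQ.sq_sub_sq_mem (d := √r) (by linarith) (h.1 _ hd)
      (by simpa [sub_eq_add_neg, add_comm] using h.2 (-√r) (by linarith))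
    rwa [← algebraMap.coe_pow, Real.sq_sqrt (by nlinarith)] at this
  · rcases lt_or_ge r 0 with hr₀ | hr₀
    · convert hQ.add_mem (hQ.sq_mem a) (hQ.algebraMap_mem (neg_nonneg.2 hr₀.le)) using 1
      push_cast; ring
    · have hd : √r < t := by simpa [Real.sqrt_sq ht] using Real.sqrt_lt_sqrt hr₀ hr
      have hr' : (r : A) = ((√r : ℝ) : A) ^ 2 := by rw [← algebraMap.coe_pow, Real.sq_sqrt hr₀]
      rw [hr']
      convert hQ.add_mem (hQ.sq_mem (a - (√r : ℝ)))
        (hQ.algebraMap_mul_mem (r := 2 * √r) (by positivity) (h.2 _ hd)) using 1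
      push_cast; ring

theorem mul (hQ : IsQuadraticModule Q) (ha : IsCut Q a t) (hb : IsCut Q b u) :
    IsCut Q (a * b) (t * u) := by
  refine of_algebraMap_mul hQ (r := 4) (by norm_num) ?_
  convert ((ha.add hQ hb).sq hQ).add hQ ((ha.add hQ hb.neg).sq hQ).neg using 1
  · push_cast; ring
  · ring

theorem nonneg (hQ : IsQuadraticModule Q) (hQ₁ : -1 ∉ Q) (h : IsCut Q a t) (ha : a ∈ Q) :
    0 ≤ t := by
  by_contra! ht
  have := hQ.nonneg_of_algebraMap_mem hQ₁ (by simpa using hQ.add_mem (h.1 (t / 2) (by linarith)) ha)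
  linarith

theorem unique (hQ : IsQuadraticModule Q) (hQ₁ : -1 ∉ Q) (h : IsCut Q a t) (h' : IsCut Q a u) :
    t = u := by
  have h₁ := ((h.add hQ h'.neg).nonneg hQ hQ₁) (by simpa using hQ.zero_mem)
  have h₂ := ((h'.add hQ h.neg).nonneg hQ hQ₁) (by simpa using hQ.zero_mem)
  linarith

end QuadraticModule.IsCut

namespace IsProperTotalArchimedean

variable {A : Type*} [CommRing A] [Algebra ℝ A] {Q : Set A}

theorem isCut_sInf (hQ : IsProperTotalArchimedean Q) (a : A) :
    IsCut Q a (sInf {r : ℝ | (r : A) - a ∈ Q}) := by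
  have hbdd : BddBelow {r : ℝ | (r : A) - a ∈ Q} := by
    obtain ⟨k, hk⟩ := hQ.isArchimedean (-a)
    refine ⟨-k, fun r hr => ?_⟩
    have := hQ.nonneg_of_algebraMap_mem hQ.neg_one_notMem (r := r + k)
      (by convert hQ.add_mem hr hk using 1; push_cast; ring)
    linarith
  refine ⟨fun r hr => ?_, fun r hr => ?_⟩
  · obtain ⟨r', hr', hr'r⟩ := exists_lt_of_csInf_lt (hQ.isArchimedean a) hr
    exact hQ.algebraMap_sub_mem_of_le hr' hr'r.le
  · have : (r : A) - a ∉ Q := fun h => (csInf_le hbdd h).not_gt hr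
    simpa using (hQ.mem_or_neg_mem _).resolve_left this

theorem sInf_eq_of_isCut (hQ : IsProperTotalArchimedean Q) {a : A} {t : ℝ} (h : IsCut Q a t) :
    sInf {r : ℝ | (r : A) - a ∈ Q} = t :=
  (hQ.isCut_sInf a).unique hQ.toIsQuadraticModule hQ.neg_one_notMem h

/-- The point of the real spectrum determined by `Q`. -/
noncomputable def character (hQ : IsProperTotalArchimedean Q) : A →ₐ[ℝ] ℝ where
  toFun a := sInf {r : ℝ | (r : A) - a ∈ Q}
  map_one' := by simpa using hQ.sInf_eq_of_isCut (IsCut.algebraMap hQ.toIsQuadraticModule 1)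
  map_mul' a b :=
    hQ.sInf_eq_of_isCut ((hQ.isCut_sInf a).mul hQ.toIsQuadraticModule (hQ.isCut_sInf b))
  map_zero' := by simpa using hQ.sInf_eq_of_isCut (IsCut.algebraMap hQ.toIsQuadraticModule 0)
  map_add' a b :=
    hQ.sInf_eq_of_isCut ((hQ.isCut_sInf a).add hQ.toIsQuadraticModule (hQ.isCut_sInf b))
  commutes' r := hQ.sInf_eq_of_isCut (IsCut.algebraMap hQ.toIsQuadraticModule r)

theorem character_nonneg (hQ : IsProperTotalArchimedean Q) {a : A} (ha : a ∈ Q) :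
    0 ≤ hQ.character a :=
  (hQ.isCut_sInf a).nonneg hQ.toIsQuadraticModule hQ.neg_one_notMem ha

end IsProperTotalArchimedean

namespace IsQuadraticModule

variable {A : Type*} [CommRing A] [Algebra ℝ A] {M : Set A}

theorem mem_or_neg_mem_of_maximal (hM : IsQuadraticModule M)
    (hmax : ∀ b ∉ M, -1 ∈ QuadraticModule.adjoin M b) (hM₁ : -1 ∉ M) (b : A) :
    b ∈ M ∨ -b ∈ M := by
  by_contra! h
  obtain ⟨m, hm, u, hu, hmu⟩ := hmax b h.1
  obtain ⟨m', hm', v, hv, hmv⟩ := hmax (-b) h.2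
  have hnu : -u ∈ M := by
    rw [show -u = v * m + u * m' + v by linear_combination v * hmu + u * hmv]
    exact hM.add_mem (hM.add_mem (hM.isSumSq_mul_mem hv hm) (hM.isSumSq_mul_mem hu hm'))
      (hM.isSumSq_mem hv)
  -- `4ub = (b + 1)² u + (b - 1)² (-u)`
  have hub : u * b ∈ M := by
    refine hM.mem_of_algebraMap_mul_mem (r := 4) (by norm_num) ?_
    convert hM.add_mem (hM.sq_mul_mem (b + 1) (hM.isSumSq_mem hu)) (hM.sq_mul_mem (b - 1) hnu)
      using 1
    push_cast; ring
  exact hM₁ (hmu ▸ hM.add_mem hm hub)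

theorem exists_isProperTotalArchimedean_superset (hM : IsQuadraticModule M) (hM₁ : -1 ∉ M)
    (hArch : IsArchimedean M) : ∃ Q, M ⊆ Q ∧ IsProperTotalArchimedean Q := by
  obtain ⟨Q, hMQ, hmax⟩ := zorn_subset_nonempty {Q : Set A | IsQuadraticModule Q ∧ -1 ∉ Q}
    (fun c hcS hc hne => ⟨⋃₀ c, ⟨.sUnion hc hne fun Q hQ => (hcS hQ).1,
      fun ⟨Q, hQ, h⟩ => (hcS hQ).2 h⟩, fun _ => Set.subset_sUnion_of_mem⟩) M ⟨hM, hM₁⟩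
  obtain ⟨hQ, hQ₁⟩ := hmax.prop
  have hQmax (b : A) (hb : b ∉ Q) : -1 ∈ QuadraticModule.adjoin Q b := by
    by_contra h
    exact hb (hmax.eq_of_subset ⟨hQ.adjoin b, h⟩ (subset_adjoin b) ▸ hQ.mem_adjoin_self b)
  exact ⟨Q, hMQ, hQ, hQ₁, hQ.mem_or_neg_mem_of_maximal hQmax hQ₁, hArch.mono hMQ⟩

/-- Jacobi's representation theorem. -/
theorem mem_of_forall_algHom_pos (hM : IsQuadraticModule M) (hArch : IsArchimedean M) {a : A}
    (ha : ∀ φ : A →ₐ[ℝ] ℝ, (∀ m ∈ M, 0 ≤ φ m) → 0 < φ a) : a ∈ M := by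
  by_cases h : -1 ∈ QuadraticModule.adjoin M (-a)
  · obtain ⟨m, hm, σ, hσ, h⟩ := h
    exact hM.mem_of_isSumSq_mul_sub_one_mem hArch hσ
      (by rwa [show σ * a - 1 = m by linear_combination h])
  · obtain ⟨Q, hMQ, hQ⟩ := (hM.adjoin (-a)).exists_isProperTotalArchimedean_superset h
      (hArch.mono (subset_adjoin _))
    have hpos := ha hQ.character fun m hm => hQ.character_nonneg (hMQ (subset_adjoin _ hm))
    have hneg := hQ.character_nonneg (hMQ (hM.mem_adjoin_self (-a)))
    rw [map_neg] at hneg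
    linarith

end IsQuadraticModule

theorem isSOS_iff_isSumSq {n : ℕ} {p : MvPolynomial (Fin n) ℝ} : IsSOS p ↔ IsSumSq p := by
  refine ⟨fun ⟨r, q, hq⟩ => hq ▸ IsSumSq.sum_sq _ q, fun h => ?_⟩
  induction h with
  | zero => exact ⟨0, ![], by simp⟩
  | sq_add a _ ih =>
    obtain ⟨r, q, rfl⟩ := ih
    exact ⟨r + 1, Fin.cons a q, by simp [Fin.sum_univ_succ, sq]⟩

/-- **Putinar's Positivstellensatz.** If the quadratic module generated by
`g 1, …, g s` is Archimedean and `p > 0` on `Ω = {x | g i x ≥ 0 ∀ i}`, then `p`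
lies in the quadratic module. -/
theorem putinar_positivstellensatz (n s : ℕ) (g : Fin s → MvPolynomial (Fin n) ℝ)
    (hArch : ∃ (N : ℕ) (σ0 : MvPolynomial (Fin n) ℝ) (σ : Fin s → MvPolynomial (Fin n) ℝ),
      IsSOS σ0 ∧ (∀ i, IsSOS (σ i)) ∧
      (N : MvPolynomial (Fin n) ℝ) - ∑ i, (X i) ^ 2 = σ0 + ∑ i, σ i * g i)
    (p : MvPolynomial (Fin n) ℝ)
    (hpos : ∀ x : Fin n → ℝ, (∀ i, 0 ≤ eval x (g i)) → 0 < eval x p) :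
    ∃ (s0 : MvPolynomial (Fin n) ℝ) (sv : Fin s → MvPolynomial (Fin n) ℝ),
      IsSOS s0 ∧ (∀ i, IsSOS (sv i)) ∧ p = s0 + ∑ i, sv i * g i := by
  obtain ⟨N, σ₀, σ, hσ₀, hσ, hN⟩ := hArch
  have hM := isQuadraticModule_span g
  have hMArch : IsArchimedean (span g) :=
    hM.isArchimedean_of_algebraMap_sub_sum_sq_mem adjoin_range_X (R := N)
      ⟨σ₀, σ, isSOS_iff_isSumSq.1 hσ₀, fun i => isSOS_iff_isSumSq.1 (hσ i),
        by rw [algebraMap.coe_natCast, hN]⟩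
  have hp : p ∈ span g := hM.mem_of_forall_algHom_pos hMArch fun φ hφ => by
    have hφ_eval : ⇑φ = eval (φ ∘ X) := by rw [← coe_aeval_eq_eval, ← aeval_unique]; rfl
    rw [hφ_eval] at hφ ⊢
    exact hpos _ fun i => hφ _ (mem_span g i)
  obtain ⟨s₀, s, hs₀, hs, rfl⟩ := hp
  exact ⟨s₀, s, isSOS_iff_isSumSq.2 hs₀, fun i => isSOS_iff_isSumSq.2 (hs i), rfl⟩
end

section
/- Let B ⊂ ℝ^n be a full-dimensional box, let K = (K_1^-, K_1^+, …, K_n^-, K_n^+) be a vector of finite real numbers with K_i^- < K_i^+ for all i, and let f be a continuously differentiable function on B with K-bounded derivatives over B. Then for every ε > 0 there exist d ∈ ℕ and a polynomial h of degree at most d that has K-bounded derivatives over B and satisfies sup_{x ∈ B} |h(x) − f(x)| < ε. -/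
/-!
The approximant is the tensor-product Bernstein polynomial of `f` on the box. Summation by parts
turns its `i`-th partial derivative at any point of the box into a convex combination, with
Bernstein weights, of the difference quotients of `f` between neighbouring grid points on lines
parallel to the `i`-th axis; by the mean value theorem these quotients lie in `[K_i^-, K_i^+]`.
Since `f` is Lipschitz on the box, the approximation error is controlled by the mean distance of
`x` to the grid points under the Bernstein weights, which the variance `t (1 - t) / N` of the
one-dimensional weights bounds by `O(1 / √N)`.
-/

open MvPolynomial

/-- The partial derivative of `g : ℝⁿ → ℝ` in the `i`-th coordinate direction. -/
noncomputable def partialDeriv {n : ℕ} (i : Fin n) (g : (Fin n → ℝ) → ℝ) :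
    (Fin n → ℝ) → ℝ :=
  fun x => fderiv ℝ g x (Pi.single i 1)

open Finset Set Filter Topology
open scoped unitInterval

theorem slope_mem_Icc_of_partialDeriv_mem_Icc {n : ℕ} {f : (Fin n → ℝ) → ℝ}
    {s : Set (Fin n → ℝ)} {i : Fin n} {a b : ℝ} (hs : Convex ℝ s)
    (hf : ∀ z ∈ s, DifferentiableAt ℝ f z) (hbdd : ∀ z ∈ s, partialDeriv i f z ∈ Icc a b)
    {x y : Fin n → ℝ} (hx : x ∈ s) (hy : y ∈ s) (hxy : ∀ j ≠ i, x j = y j) (hlt : x i < y i) :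
    (f y - f x) / (y i - x i) ∈ Icc a b := by
  have hyx : y - x = (y i - x i) • Pi.single i 1 := by
    ext j
    by_cases hj : j = i
    · subst hj; simp
    · simp [hj, hxy j hj]
  have hseg : ∀ θ ∈ Icc (0 : ℝ) 1, x + θ • (y - x) ∈ s := fun θ hθ => hs.add_smul_sub_mem hx hy hθ
  have hderiv : ∀ θ ∈ Icc (0 : ℝ) 1, HasDerivAt (fun θ : ℝ => f (x + θ • (y - x)))
      ((y i - x i) * partialDeriv i f (x + θ • (y - x))) θ := fun θ hθ => by
    refine ((hf _ (hseg θ hθ)).hasFDerivAt.comp_hasDerivAt θ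
      (((hasDerivAt_id θ).smul_const (y - x)).const_add x)).congr_deriv ?_
    rw [one_smul, hyx, map_smul, smul_eq_mul, partialDeriv]
  obtain ⟨θ, hθ, hslope⟩ := exists_hasDerivAt_eq_slope _ _ zero_lt_one
    (fun θ hθ => (hderiv θ hθ).continuousAt.continuousWithinAt)
    fun θ hθ => hderiv θ (Ioo_subset_Icc_self hθ)
  simp only [one_smul, zero_smul, add_zero, add_sub_cancel, sub_zero, div_one] at hslope
  rw [← hslope, mul_div_cancel_left₀ _ (sub_pos.2 hlt).ne']
  exact hbdd _ (hseg θ (Ioo_subset_Icc_self hθ))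

namespace bernsteinPolynomial

theorem eval_nonneg {N ν : ℕ} {t : ℝ} (ht : t ∈ I) : 0 ≤ (bernsteinPolynomial ℝ N ν).eval t :=
  bernstein_nonneg (x := ⟨t, ht⟩)

theorem sum_eval {R : Type*} [CommRing R] (N : ℕ) (t : R) :
    ∑ ν : Fin (N + 1), (bernsteinPolynomial R N ν).eval t = 1 := by
  simpa [Fin.sum_univ_eq_sum_range (fun ν => (bernsteinPolynomial R N ν).eval t),
    Polynomial.eval_finsetSum] using congr_arg (Polynomial.eval t) (bernsteinPolynomial.sum R N)

theorem sum_eval_mul_abs_sub_le {N : ℕ} (hN : N ≠ 0) {t : ℝ} (ht : t ∈ I) :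
    ∑ ν : Fin (N + 1), (bernsteinPolynomial ℝ N ν).eval t * |t - ν / N| ≤ 1 / (2 * √N) := by
  have hvar : ∑ ν : Fin (N + 1), (bernsteinPolynomial ℝ N ν).eval t * |t - ν / N| ^ 2 ≤
      1 / (4 * N) := by
    have hN' : (0 : ℝ) < N := by positivity
    calc _ = t * (1 - t) / N := by
          rw [← bernstein.variance hN ⟨t, ht⟩]
          exact sum_congr rfl fun ν _ => by rw [sq_abs, mul_comm]; rfl
      _ ≤ 1 / (4 * N) := by
          rw [div_le_div_iff₀ hN' (by positivity)]
          nlinarith [sq_nonneg (2 * t - 1)]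
  rw [← pow_le_pow_iff_left₀ (sum_nonneg fun ν _ => mul_nonneg (eval_nonneg ht) (abs_nonneg _))
    (by positivity) two_ne_zero]
  calc (∑ ν : Fin (N + 1), (bernsteinPolynomial ℝ N ν).eval t * |t - ν / N|) ^ 2
      ≤ (∑ ν : Fin (N + 1), (bernsteinPolynomial ℝ N ν).eval t) *
          ∑ ν : Fin (N + 1), (bernsteinPolynomial ℝ N ν).eval t * |t - ν / N| ^ 2 :=
        sum_sq_le_sum_mul_sum_of_sq_le_mul _ (fun ν _ => eval_nonneg ht)
          (fun ν _ => mul_nonneg (eval_nonneg ht) (sq_nonneg _)) fun ν _ => le_of_eq (by ring)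
    _ ≤ 1 / (4 * N) := by rwa [sum_eval, one_mul]
    _ = (1 / (2 * √N)) ^ 2 := by
        rw [div_pow, mul_pow, Real.sq_sqrt N.cast_nonneg]; norm_num

theorem sum_eval_derivative_mul {R : Type*} [CommRing R] (N : ℕ) (a : Fin (N + 2) → R) (t : R) :
    ∑ ν : Fin (N + 2), (Polynomial.derivative (bernsteinPolynomial R (N + 1) ν)).eval t * a ν =
      (N + 1) * ∑ m : Fin (N + 1),
        (bernsteinPolynomial R N m).eval t * (a m.succ - a m.castSucc) := by
  have hshift := Fin.sum_univ_succ fun ν : Fin (N + 2) => (bernsteinPolynomial R N ν).eval t * a ν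
  rw [Fin.sum_univ_castSucc] at hshift
  simp only [Fin.val_succ, Fin.val_castSucc, Fin.val_last, Fin.val_zero,
    eq_zero_of_lt R N.lt_succ_self, Polynomial.eval_zero, zero_mul, add_zero] at hshift
  rw [Fin.sum_univ_succ]
  simp only [Fin.val_zero, Fin.val_succ, derivative_zero, derivative_succ, Nat.add_sub_cancel,
    Polynomial.eval_mul, Polynomial.eval_neg, Polynomial.eval_sub, Polynomial.eval_add,
    Polynomial.eval_one, Polynomial.eval_natCast,
    Nat.cast_succ, mul_sub, sub_mul, sum_sub_distrib, mul_assoc, ← mul_sum] at hshift ⊢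
  linear_combination (↑N + 1) * hshift

theorem sum_eval_derivative_div_mul_mem_Icc {N : ℕ} {a : Fin (N + 2) → ℝ} {c lo hi t : ℝ}
    (ha : ∀ m : Fin (N + 1), (N + 1) * (a m.succ - a m.castSucc) / c ∈ Icc lo hi) (ht : t ∈ I) :
    ∑ ν : Fin (N + 2),
      (Polynomial.derivative (bernsteinPolynomial ℝ (N + 1) ν)).eval t / c * a ν ∈ Icc lo hi := by
  have hsum : ∑ ν : Fin (N + 2),
      (Polynomial.derivative (bernsteinPolynomial ℝ (N + 1) ν)).eval t / c * a ν =
      ∑ m : Fin (N + 1), (bernsteinPolynomial ℝ N m).eval t *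
        ((N + 1) * (a m.succ - a m.castSucc) / c) := by
    simp_rw [div_mul_eq_mul_div, ← sum_div, sum_eval_derivative_mul, mul_sum, sum_div]
    exact sum_congr rfl fun m _ => by ring
  rw [hsum]
  exact (convex_Icc lo hi).sum_mem (fun m _ => eval_nonneg ht) (sum_eval N t) fun m _ => ha m

end bernsteinPolynomial

section TensorSum

variable {ι α R : Type*} [Fintype ι] [DecidableEq ι] [CommSemiring R]

theorem prod_apply_funSplitAt_symm (i : ι) (g : ι → α → R) (ν : α) (r : {j // j ≠ i} → α) :
    ∏ j, g j ((Equiv.funSplitAt i α).symm (ν, r) j) = g i ν * ∏ j : {j // j ≠ i}, g j (r j) := by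
  rw [Fintype.prod_eq_mul_prod_subtype_ne _ i, Equiv.funSplitAt_symm_apply, dif_pos rfl]
  exact congrArg _ (prod_congr rfl fun j _ => by rw [Equiv.funSplitAt_symm_apply, dif_neg j.2])

theorem sum_mul_prod_eq_sum_funSplitAt [Fintype α] (i : ι) (F : (ι → α) → R) (g : ι → α → R) :
    ∑ k : ι → α, F k * ∏ j, g j (k j) =
      ∑ r : {j // j ≠ i} → α, (∏ j : {j // j ≠ i}, g j (r j)) *
        ∑ ν, g i ν * F ((Equiv.funSplitAt i α).symm (ν, r)) := by
  rw [← (Equiv.funSplitAt i α).symm.sum_comp, Fintype.sum_prod_type, sum_comm]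
  refine sum_congr rfl fun r _ => ?_
  rw [mul_sum]
  refine sum_congr rfl fun ν _ => ?_
  rw [prod_apply_funSplitAt_symm]
  ring

theorem sum_prod_eq_one [Fintype α] {κ : Type*} [Fintype κ] [DecidableEq κ] {g : κ → α → R}
    (hg : ∀ j, ∑ ν, g j ν = 1) : ∑ k : κ → α, ∏ j, g j (k j) = 1 := by
  rw [← Fintype.prod_sum]
  simp [hg]

theorem sum_mul_prod_eq_of_sum_eq_one [Fintype α] (i : ι) (a : α → R) {g : ι → α → R}
    (hg : ∀ j, ∑ ν, g j ν = 1) : ∑ k : ι → α, a (k i) * ∏ j, g j (k j) = ∑ ν, g i ν * a ν := by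
  simp_rw [sum_mul_prod_eq_sum_funSplitAt i, Equiv.funSplitAt_symm_apply, dif_pos, ← sum_mul,
    sum_prod_eq_one fun j : {j // j ≠ i} => hg j, one_mul]

end TensorSum

theorem Derivation.map_prod_of_map_eq_zero {R A M ι : Type*} [CommSemiring R] [CommSemiring A]
    [Algebra R A] [AddCommMonoid M] [Module A M] [Module R M] (D : Derivation R A M)
    [DecidableEq ι] {s : Finset ι} {P : ι → A} {j₀ : ι} (hj₀ : j₀ ∈ s)
    (h : ∀ j ∈ s, j ≠ j₀ → D (P j) = 0) :
    D (∏ j ∈ s, P j) = (∏ j ∈ s.erase j₀, P j) • D (P j₀) := by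
  have hrest : D (∏ j ∈ s.erase j₀, P j) = 0 :=
    prod_induction P (fun p => D p = 0) (fun p q hp hq => by simp [hp, hq]) D.map_one_eq_zero
      fun j hj => h j (mem_of_mem_erase hj) (ne_of_mem_erase hj)
  rw [← mul_prod_erase s P hj₀, D.leibniz, hrest, smul_zero, zero_add]

theorem MvPolynomial.eval_polynomial_aeval {ι R : Type*} [CommSemiring R] (x : ι → R)
    (q : MvPolynomial ι R) (p : Polynomial R) :
    eval x (Polynomial.aeval q p) = p.eval (eval x q) := by
  simpa using (Polynomial.aeval_algHom_apply (MvPolynomial.aeval x) q p).symm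

noncomputable section Box

variable {ι : Type*}

def boxCoord (l u x : ι → ℝ) (j : ι) : ℝ := (x j - l j) / (u j - l j)

def gridPoint (l u : ι → ℝ) (N : ℕ) (k : ι → Fin (N + 1)) : ι → ℝ :=
  fun j => l j + (k j : ℝ) / N * (u j - l j)

def boxBernsteinFactor (l u : ι → ℝ) (N : ℕ) (j : ι) (ν : ℕ) : MvPolynomial ι ℝ :=
  Polynomial.aeval (C (u j - l j)⁻¹ * (X j - C (l j))) (bernsteinPolynomial ℝ N ν)

def boxBernstein [Fintype ι] [DecidableEq ι] (l u : ι → ℝ) (N : ℕ) (f : (ι → ℝ) → ℝ) :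
    MvPolynomial ι ℝ :=
  ∑ k : ι → Fin (N + 1), C (f (gridPoint l u N k)) * ∏ j, boxBernsteinFactor l u N j (k j)

theorem boxCoord_mem_unitInterval {l u x : ι → ℝ} (hlu : ∀ j, l j < u j) (hx : x ∈ Icc l u)
    (j : ι) : boxCoord l u x j ∈ I := by
  have hj : l j ≤ x j ∧ x j ≤ u j := ⟨hx.1 j, hx.2 j⟩
  have hc := sub_pos.2 (hlu j)
  exact ⟨div_nonneg (by linarith) hc.le, (div_le_one hc).2 (by linarith)⟩

theorem gridPoint_mem_Icc {l u : ι → ℝ} (hlu : l ≤ u) {N : ℕ} (k : ι → Fin (N + 1)) :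
    gridPoint l u N k ∈ Icc l u := by
  have hk : ∀ j, (k j : ℝ) / N ∈ I := fun j => (bernstein.z (k j)).2
  refine ⟨fun j => ?_, fun j => ?_⟩ <;> simp only [gridPoint] <;>
    nlinarith [(hk j).1, (hk j).2, sub_nonneg.2 (hlu j)]

theorem eval_boxBernsteinFactor (l u x : ι → ℝ) (N : ℕ) (j : ι) (ν : ℕ) :
    eval x (boxBernsteinFactor l u N j ν) =
      (bernsteinPolynomial ℝ N ν).eval (boxCoord l u x j) := by
  simp [boxBernsteinFactor, eval_polynomial_aeval, boxCoord, div_eq_inv_mul]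

theorem pderiv_boxBernsteinFactor_of_ne (l u : ι → ℝ) (N : ℕ) {i j : ι} (h : j ≠ i) (ν : ℕ) :
    pderiv i (boxBernsteinFactor l u N j ν) = 0 := by
  simp [boxBernsteinFactor, pderiv_X_of_ne h]

theorem eval_pderiv_boxBernsteinFactor (l u x : ι → ℝ) (N : ℕ) (i : ι) (ν : ℕ) :
    eval x (pderiv i (boxBernsteinFactor l u N i ν)) =
      (Polynomial.derivative (bernsteinPolynomial ℝ N ν)).eval (boxCoord l u x i) /
        (u i - l i) := by
  simp [boxBernsteinFactor, eval_polynomial_aeval, boxCoord, div_eq_inv_mul, mul_comm]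

theorem norm_gridPoint_sub_le [Fintype ι] {l u x : ι → ℝ} (hlu : ∀ j, l j < u j) (N : ℕ)
    (k : ι → Fin (N + 1)) :
    ‖gridPoint l u N k - x‖ ≤ ∑ j, (u j - l j) * |boxCoord l u x j - k j / N| := by
  refine (pi_norm_le_iff_of_nonneg (sum_nonneg fun j _ => by
    have := (hlu j).le; positivity)).2 fun j => ?_
  have hc := sub_pos.2 (hlu j)
  have hdiff : (gridPoint l u N k - x) j = (u j - l j) * (k j / N - boxCoord l u x j) := by
    simp only [Pi.sub_apply, gridPoint, boxCoord]
    field_simp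
    ring
  rw [Real.norm_eq_abs, hdiff, abs_mul, abs_of_pos hc, abs_sub_comm]
  exact single_le_sum (f := fun j => (u j - l j) * |boxCoord l u x j - k j / N|)
    (fun j _ => mul_nonneg (sub_pos.2 (hlu j)).le (abs_nonneg _)) (mem_univ j)

variable [Fintype ι] [DecidableEq ι]

theorem eval_boxBernstein (l u x : ι → ℝ) (N : ℕ) (f : (ι → ℝ) → ℝ) :
    eval x (boxBernstein l u N f) = ∑ k : ι → Fin (N + 1),
      f (gridPoint l u N k) * ∏ j, (bernsteinPolynomial ℝ N (k j)).eval (boxCoord l u x j) := by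
  simp [boxBernstein, eval_boxBernsteinFactor]

theorem eval_pderiv_boxBernstein (l u x : ι → ℝ) (N : ℕ) (f : (ι → ℝ) → ℝ) (i : ι) :
    eval x (pderiv i (boxBernstein l u N f)) = ∑ k : ι → Fin (N + 1),
      f (gridPoint l u N k) * ∏ j, Function.update
        (fun j (ν : Fin (N + 1)) => (bernsteinPolynomial ℝ N ν).eval (boxCoord l u x j)) i
        (fun ν => (Polynomial.derivative (bernsteinPolynomial ℝ N ν)).eval (boxCoord l u x i) /
          (u i - l i)) j (k j) := by
  simp only [boxBernstein, map_sum, pderiv_C_mul, map_mul, eval_C]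
  refine sum_congr rfl fun k _ => congrArg _ ?_
  rw [(pderiv i).map_prod_of_map_eq_zero (mem_univ i)
      fun j _ hj => pderiv_boxBernsteinFactor_of_ne l u N hj _,
    ← mul_prod_erase univ _ (mem_univ i), Function.update_self, smul_eq_mul, map_mul, map_prod,
    eval_pderiv_boxBernsteinFactor, mul_comm]
  exact congrArg _ (prod_congr rfl fun j hj => by
    rw [Function.update_of_ne (ne_of_mem_erase hj), eval_boxBernsteinFactor])

theorem eval_pderiv_boxBernstein_mem_Icc {l u : ι → ℝ} (hlu : ∀ j, l j < u j)
    {f : (ι → ℝ) → ℝ} {i : ι} {a b : ℝ}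
    (hslope : ∀ x ∈ Icc l u, ∀ y ∈ Icc l u, (∀ j ≠ i, x j = y j) → x i < y i →
      (f y - f x) / (y i - x i) ∈ Icc a b)
    (N : ℕ) {x : ι → ℝ} (hx : x ∈ Icc l u) :
    eval x (pderiv i (boxBernstein l u (N + 1) f)) ∈ Icc a b := by
  have ht := boxCoord_mem_unitInterval hlu hx
  rw [eval_pderiv_boxBernstein, sum_mul_prod_eq_sum_funSplitAt i]
  simp only [Function.update_self]
  refine (convex_Icc (𝕜 := ℝ) _ _).sum_mem (fun r _ => prod_nonneg fun j _ => ?_)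
    (sum_prod_eq_one fun j => ?_) fun r _ => ?_
  · rw [Function.update_of_ne j.2]
    exact bernsteinPolynomial.eval_nonneg (ht j)
  · simp only [Function.update_of_ne j.2]
    exact bernsteinPolynomial.sum_eval _ _
  refine bernsteinPolynomial.sum_eval_derivative_div_mul_mem_Icc (fun m => ?_) (ht i)
  set join := fun ν => (Equiv.funSplitAt i (Fin (N + 1 + 1))).symm (ν, r)
  have hagree : ∀ j ≠ i, gridPoint l u (N + 1) (join m.castSucc) j =
      gridPoint l u (N + 1) (join m.succ) j := fun j hj => by
    simp [join, gridPoint, Equiv.funSplitAt_symm_apply, hj]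
  have hstep : gridPoint l u (N + 1) (join m.succ) i - gridPoint l u (N + 1) (join m.castSucc) i =
      (u i - l i) / (N + 1) := by
    simp [join, gridPoint, Equiv.funSplitAt_symm_apply]
    field_simp
    ring
  have hlt : gridPoint l u (N + 1) (join m.castSucc) i < gridPoint l u (N + 1) (join m.succ) i := by
    rw [← sub_pos, hstep]
    exact div_pos (sub_pos.2 (hlu i)) N.cast_add_one_pos
  have hlu' : l ≤ u := fun j => (hlu j).le
  have := hslope _ (gridPoint_mem_Icc hlu' _) _ (gridPoint_mem_Icc hlu' _) hagree hlt
  rwa [hstep, div_div_eq_mul_div, mul_comm] at this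

theorem abs_eval_boxBernstein_sub_le {l u : ι → ℝ} (hlu : ∀ j, l j < u j) {K : NNReal}
    {f : (ι → ℝ) → ℝ} (hf : LipschitzOnWith K f (Icc l u)) {N : ℕ} (hN : N ≠ 0) {x : ι → ℝ}
    (hx : x ∈ Icc l u) :
    |eval x (boxBernstein l u N f) - f x| ≤ K * (∑ j, (u j - l j)) / (2 * √N) := by
  set t := boxCoord l u x
  have ht := boxCoord_mem_unitInterval hlu hx
  set G := fun j (ν : Fin (N + 1)) => (bernsteinPolynomial ℝ N ν).eval (t j)
  have hG : ∀ j, ∑ ν, G j ν = 1 := fun j => bernsteinPolynomial.sum_eval N (t j)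
  have hw : ∀ k : ι → Fin (N + 1), 0 ≤ ∏ j, G j (k j) :=
    fun k => prod_nonneg fun j _ => bernsteinPolynomial.eval_nonneg (ht j)
  calc |eval x (boxBernstein l u N f) - f x|
      = |∑ k : ι → Fin (N + 1), (f (gridPoint l u N k) - f x) * ∏ j, G j (k j)| := by
        rw [eval_boxBernstein]
        show |∑ k, f (gridPoint l u N k) * ∏ j, G j (k j) - f x| = _
        simp_rw [sub_mul, sum_sub_distrib, ← mul_sum, sum_prod_eq_one hG, mul_one]
    _ ≤ ∑ k : ι → Fin (N + 1), K * (∑ j, (u j - l j) * |t j - k j / N|) * ∏ j, G j (k j) := by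
        refine (abs_sum_le_sum_abs _ _).trans (sum_le_sum fun k _ => ?_)
        rw [abs_mul, abs_of_nonneg (hw k)]
        refine mul_le_mul_of_nonneg_right ?_ (hw k)
        calc |f (gridPoint l u N k) - f x| ≤ K * ‖gridPoint l u N k - x‖ := by
              rw [← Real.dist_eq, ← dist_eq_norm]
              exact hf.dist_le_mul _ (gridPoint_mem_Icc (fun j => (hlu j).le) k) _ hx
          _ ≤ _ := by gcongr; exact norm_gridPoint_sub_le hlu N k
    _ = K * ∑ j, (u j - l j) * ∑ k : ι → Fin (N + 1), |t j - k j / N| * ∏ j, G j (k j) := by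
        simp_rw [mul_assoc, ← mul_sum, sum_mul, mul_assoc]
        rw [sum_comm]
        simp_rw [← mul_sum]
    _ = K * ∑ j, (u j - l j) * ∑ ν, G j ν * |t j - ν / N| := by
        congr 1
        exact sum_congr rfl fun j _ => congrArg _
          (sum_mul_prod_eq_of_sum_eq_one j (fun ν : Fin (N + 1) => |t j - ν / N|) hG)
    _ ≤ K * ∑ j, (u j - l j) * (1 / (2 * √N)) := by
        gcongr with j
        · exact (sub_pos.2 (hlu j)).le
        · exact bernsteinPolynomial.sum_eval_mul_abs_sub_le hN (ht j)
    _ = K * (∑ j, (u j - l j)) / (2 * √N) := by rw [← sum_mul, mul_one_div, mul_div_assoc]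

end Box

theorem bounded_derivative_polynomial_approximation_general
    (n : ℕ) (l u : Fin n → ℝ) (hlu : ∀ i, l i < u i)
    (B : Set (Fin n → ℝ)) (hB : B = {x | ∀ i, l i ≤ x i ∧ x i ≤ u i})
    (Km Kp : Fin n → ℝ)
    (f : (Fin n → ℝ) → ℝ)
    (U : Set (Fin n → ℝ)) (hUopen : IsOpen U) (hBU : B ⊆ U)
    (hf : ContDiffOn ℝ 1 f U)
    (hfbdd : ∀ x ∈ B, ∀ i, Km i ≤ partialDeriv i f x ∧ partialDeriv i f x ≤ Kp i) :
    ∀ ε > (0 : ℝ), ∃ (d : ℕ) (h : MvPolynomial (Fin n) ℝ),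
      h.totalDegree ≤ d ∧
      (∀ x ∈ B, ∀ i, Km i ≤ eval x (pderiv i h) ∧ eval x (pderiv i h) ≤ Kp i) ∧
      ∀ x ∈ B, |eval x h - f x| < ε := by
  obtain rfl : B = Icc l u := hB.trans (by ext x; simp [Pi.le_def, forall_and])
  intro ε hε
  obtain ⟨K, hK⟩ := (hf.mono hBU).exists_lipschitzOnWith one_ne_zero (convex_Icc l u) isCompact_Icc
  have hdiff : ∀ z ∈ Icc l u, DifferentiableAt ℝ f z := fun z hz =>
    (hf.contDiffAt (hUopen.mem_nhds (hBU hz))).differentiableAt one_ne_zero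
  have hsmall : Tendsto (fun N : ℕ => K * (∑ j, (u j - l j)) / (2 * √N)) atTop (𝓝 0) :=
    tendsto_const_nhds.div_atTop <| (tendsto_const_mul_atTop_of_pos two_pos).2 <|
      Real.tendsto_sqrt_atTop.comp tendsto_natCast_atTop_atTop
  obtain ⟨N, hN⟩ := ((hsmall.comp (tendsto_add_atTop_nat 1)).eventually (gt_mem_nhds hε)).exists
  exact ⟨_, boxBernstein l u (N + 1) f, le_rfl,
    fun x hx i => eval_pderiv_boxBernstein_mem_Icc hlu (fun y hy z hz =>
      slope_mem_Icc_of_partialDeriv_mem_Icc (convex_Icc l u) hdiff (fun w hw => hfbdd w hw i) hy hz)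
      N hx,
    fun x hx => (abs_eval_boxBernstein_sub_le hlu hK N.succ_ne_zero hx).trans_lt hN⟩

/-- A continuously differentiable function with `K`-bounded derivatives over a
full-dimensional box `B` can be approximated uniformly on `B`, to any accuracy, by a
polynomial with `K`-bounded derivatives over `B`. -/
theorem bounded_derivative_polynomial_approximation
    (n : ℕ) (l u : Fin n → ℝ) (hlu : ∀ i, l i < u i)
    (B : Set (Fin n → ℝ)) (hB : B = {x | ∀ i, l i ≤ x i ∧ x i ≤ u i})
    (Km Kp : Fin n → ℝ) (hK : ∀ i, Km i < Kp i)
    (f : (Fin n → ℝ) → ℝ)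
    (U : Set (Fin n → ℝ)) (hUopen : IsOpen U) (hBU : B ⊆ U)
    (hf : ContDiffOn ℝ 1 f U)
    (hfbdd : ∀ x ∈ B, ∀ i, Km i ≤ partialDeriv i f x ∧ partialDeriv i f x ≤ Kp i) :
    ∀ ε > (0 : ℝ), ∃ (d : ℕ) (h : MvPolynomial (Fin n) ℝ),
      h.totalDegree ≤ d ∧
      (∀ x ∈ B, ∀ i, Km i ≤ eval x (pderiv i h) ∧ eval x (pderiv i h) ≤ Kp i) ∧
      ∀ x ∈ B, |eval x h - f x| < ε :=
  bounded_derivative_polynomial_approximation_general n l u hlu B hB Km Kp f U hUopen hBU hf hfbdd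
end

section
/- Let B ⊂ ℝ^n be a full-dimensional box, let f be a twice continuously differentiable function on B with Hessian H_f(x) ⪰ 0 for all x ∈ B, let δ > 0, and let q be a twice continuously differentiable function (e.g., a polynomial) such that |∂²f(x)/∂x_i∂x_j − ∂²q(x)/∂x_i∂x_j| ≤ δ for all x ∈ B and all i, j ∈ {1, …, n}. Then the function p(x) = q(x) + nδ·(x_1² + … + x_n²) satisfies H_p(x) ⪰ nδ·I ≻ 0 for all x ∈ B; in particular, p is convex over B. -/
open Matrix Filter Topology

section QuadraticForm

variable {ι : Type*} [Fintype ι]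

theorem Matrix.dotProduct_mulVec_le_of_abs_le {N : Matrix ι ι ℝ} {δ : ℝ} (hδ : 0 ≤ δ)
    (hN : ∀ i j, |N i j| ≤ δ) (v : ι → ℝ) :
    v ⬝ᵥ N *ᵥ v ≤ Fintype.card ι * δ * (v ⬝ᵥ v) := by
  have hterm : ∀ i j, v i * N i j * v j ≤ δ * (|v i| * |v j|) := fun i j =>
    calc v i * N i j * v j ≤ |v i * N i j * v j| := le_abs_self _
      _ = |N i j| * (|v i| * |v j|) := by rw [abs_mul, abs_mul]; ring
      _ ≤ δ * (|v i| * |v j|) := by gcongr; exact hN i j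
  have hcs : (∑ i, |v i|) ^ 2 ≤ Fintype.card ι * ∑ i, v i ^ 2 := by
    simpa [sq_abs] using sq_sum_le_card_mul_sum_sq (s := Finset.univ) (f := fun i => |v i|)
  calc v ⬝ᵥ N *ᵥ v = ∑ i, ∑ j, v i * N i j * v j := by
        simp [dotProduct, mulVec, Finset.mul_sum, mul_assoc]
    _ ≤ ∑ i, ∑ j, δ * (|v i| * |v j|) :=
        Finset.sum_le_sum fun i _ => Finset.sum_le_sum fun j _ => hterm i j
    _ = δ * (∑ i, |v i|) ^ 2 := by
        rw [sq, Finset.sum_mul_sum, Finset.mul_sum]; simp only [Finset.mul_sum]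
    _ ≤ δ * (Fintype.card ι * ∑ i, v i ^ 2) := by gcongr
    _ = Fintype.card ι * δ * (v ⬝ᵥ v) := by simp only [dotProduct, sq]; ring

theorem Matrix.posSemidef_add_card_mul_smul_one_of_abs_sub_le [DecidableEq ι]
    {A M : Matrix ι ι ℝ} (hA : A.PosSemidef) (hM : M.IsHermitian) {δ : ℝ} (hδ : 0 ≤ δ)
    (hAM : ∀ i j, |A i j - M i j| ≤ δ) :
    (M + (Fintype.card ι * δ) • 1).PosSemidef := by
  refine .of_dotProduct_mulVec_nonneg (hM.add (isHermitian_one.smul (.all _))) fun v => ?_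
  have hAv := hA.dotProduct_mulVec_nonneg v
  have hdiff := dotProduct_mulVec_le_of_abs_le (N := A - M) hδ hAM v
  simp only [star_trivial, add_mulVec, sub_mulVec, smul_mulVec, one_mulVec, dotProduct_add,
    dotProduct_sub, dotProduct_smul, smul_eq_mul] at hAv hdiff ⊢
  linarith

end QuadraticForm

noncomputable def hessianMatrix {n : ℕ} (g : (Fin n → ℝ) → ℝ) (x : Fin n → ℝ) :
    Matrix (Fin n) (Fin n) ℝ :=
  Matrix.of fun i j => partialDeriv i (partialDeriv j g) x

section SecondPartials

variable {n : ℕ} {g h : (Fin n → ℝ) → ℝ} {x : Fin n → ℝ}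

theorem Filter.EventuallyEq.partialDeriv_eq (hgh : g =ᶠ[𝓝 x] h) (i : Fin n) :
    partialDeriv i g x = partialDeriv i h x := by
  simp only [partialDeriv, hgh.fderiv_eq]

theorem partialDeriv_add (hg : DifferentiableAt ℝ g x) (hh : DifferentiableAt ℝ h x)
    (i : Fin n) : partialDeriv i (g + h) x = partialDeriv i g x + partialDeriv i h x := by
  simp only [partialDeriv, fderiv_add hg hh, _root_.add_apply]

theorem ContDiffAt.differentiableAt_fderiv (hg : ContDiffAt ℝ 2 g x) :
    DifferentiableAt ℝ (fderiv ℝ g) x :=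
  (hg.fderiv_right (m := 1) le_rfl).differentiableAt one_ne_zero

theorem ContDiffAt.differentiableAt_partialDeriv (hg : ContDiffAt ℝ 2 g x) (i : Fin n) :
    DifferentiableAt ℝ (partialDeriv i g) x :=
  hg.differentiableAt_fderiv.clm_apply (differentiableAt_const _)

theorem ContDiffAt.partialDeriv_partialDeriv_eq_fderiv_fderiv (hg : ContDiffAt ℝ 2 g x)
    (i j : Fin n) :
    partialDeriv i (partialDeriv j g) x
      = fderiv ℝ (fderiv ℝ g) x (Pi.single i 1) (Pi.single j 1) := by
  change fderiv ℝ (fun y => fderiv ℝ g y (Pi.single j 1)) x (Pi.single i 1) = _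
  simp [fderiv_clm_apply hg.differentiableAt_fderiv (differentiableAt_const _)]

theorem ContDiffAt.isHermitian_hessianMatrix (hg : ContDiffAt ℝ 2 g x) :
    (hessianMatrix g x).IsHermitian := by
  refine IsHermitian.ext fun i j => ?_
  simp only [hessianMatrix, of_apply, star_trivial, hg.partialDeriv_partialDeriv_eq_fderiv_fderiv]
  exact hg.isSymmSndFDerivAt (by simp) _ _

theorem ContDiffAt.hessianMatrix_add (hg : ContDiffAt ℝ 2 g x) (hh : ContDiffAt ℝ 2 h x) :
    hessianMatrix (g + h) x = hessianMatrix g x + hessianMatrix h x := by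
  ext i j
  have hfirst : partialDeriv j (g + h) =ᶠ[𝓝 x] partialDeriv j g + partialDeriv j h := by
    filter_upwards [hg.eventually (by simp), hh.eventually (by simp)] with y hgy hhy
    exact partialDeriv_add (hgy.differentiableAt two_ne_zero) (hhy.differentiableAt two_ne_zero) j
  rw [hessianMatrix, of_apply, hfirst.partialDeriv_eq,
    partialDeriv_add (hg.differentiableAt_partialDeriv j) (hh.differentiableAt_partialDeriv j)]
  rfl

end SecondPartials

section SumOfSquares

variable {n : ℕ}

theorem hasFDerivAt_sum_sq (y : Fin n → ℝ) :
    HasFDerivAt (fun y : Fin n → ℝ => ∑ k, y k ^ 2)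
      (∑ k, (2 * y k) • (ContinuousLinearMap.proj k : (Fin n → ℝ) →L[ℝ] ℝ)) y :=
  HasFDerivAt.fun_sum fun k _ => by
    simpa using (ContinuousLinearMap.proj k : (Fin n → ℝ) →L[ℝ] ℝ).hasFDerivAt.pow 2

theorem partialDeriv_const_mul_sum_sq (c : ℝ) (j : Fin n) :
    partialDeriv j (fun y : Fin n → ℝ => c * ∑ k, y k ^ 2) = fun y => 2 * c * y j := by
  funext y
  simp only [partialDeriv, ((hasFDerivAt_sum_sq y).const_mul c).fderiv, _root_.smul_apply,
    _root_.sum_apply, ContinuousLinearMap.proj_apply, Pi.single_apply, smul_eq_mul, mul_ite,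
    mul_one, mul_zero, Finset.sum_ite_eq', Finset.mem_univ, ↓reduceIte]
  ring

theorem partialDeriv_const_mul_apply (c : ℝ) (i j : Fin n) :
    partialDeriv i (fun y : Fin n → ℝ => c * y j)
      = fun _ => c * (1 : Matrix (Fin n) (Fin n) ℝ) i j := by
  funext y
  have hlin : HasFDerivAt (fun y : Fin n → ℝ => c * y j)
      (c • (ContinuousLinearMap.proj j : (Fin n → ℝ) →L[ℝ] ℝ)) y :=
    (ContinuousLinearMap.proj j : (Fin n → ℝ) →L[ℝ] ℝ).hasFDerivAt.const_mul c
  simp [partialDeriv, hlin.fderiv, Pi.single_apply, one_apply, eq_comm]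

theorem hessianMatrix_const_mul_sum_sq (c : ℝ) (x : Fin n → ℝ) :
    hessianMatrix (fun y : Fin n → ℝ => c * ∑ k, y k ^ 2) x = (2 * c) • 1 := by
  ext i j
  simp [hessianMatrix, partialDeriv_const_mul_sum_sq, partialDeriv_const_mul_apply]

end SumOfSquares

theorem perturbed_approximation_is_convex_general
    (n : ℕ)
    (B : Set (Fin n → ℝ))
    (f q : (Fin n → ℝ) → ℝ)
    (U : Set (Fin n → ℝ)) (hUopen : IsOpen U) (hBU : B ⊆ U)
    (hq : ContDiffOn ℝ 2 q U)
    (hfconv : ∀ x ∈ B,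
      (Matrix.of fun i j => partialDeriv i (partialDeriv j f) x).PosSemidef)
    (δ : ℝ) (hδ : 0 < δ)
    (hclose : ∀ x ∈ B, ∀ i j,
      |partialDeriv i (partialDeriv j f) x - partialDeriv i (partialDeriv j q) x| ≤ δ)
    (p : (Fin n → ℝ) → ℝ)
    (hp : ∀ x, p x = q x + n * δ * ∑ i, (x i) ^ 2) :
    ∀ x ∈ B,
      ((Matrix.of fun i j => partialDeriv i (partialDeriv j p) x) -
        ((n : ℝ) * δ) • (1 : Matrix (Fin n) (Fin n) ℝ)).PosSemidef ∧
      (Matrix.of fun i j => partialDeriv i (partialDeriv j p) x).PosDef := by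
  intro x hx
  change (hessianMatrix p x - _).PosSemidef ∧ (hessianMatrix p x).PosDef
  have hqx : ContDiffAt ℝ 2 q x := hq.contDiffAt (hUopen.mem_nhds (hBU hx))
  have hHp : hessianMatrix p x = hessianMatrix q x + (2 * (n * δ)) • 1 := by
    rw [show p = q + fun y => n * δ * ∑ i, y i ^ 2 from funext hp,
      hqx.hessianMatrix_add (by fun_prop), hessianMatrix_const_mul_sum_sq]
  have hpsd : (hessianMatrix q x + ((n : ℝ) * δ) • 1).PosSemidef := by
    simpa only [Fintype.card_fin] using posSemidef_add_card_mul_smul_one_of_abs_sub_le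
      (hfconv x hx) hqx.isHermitian_hessianMatrix hδ.le (hclose x hx)
  have hshift :
      hessianMatrix p x - ((n : ℝ) * δ) • 1 = hessianMatrix q x + ((n : ℝ) * δ) • 1 := by
    rw [hHp]; module
  refine ⟨hshift ▸ hpsd, ?_⟩
  rcases n.eq_zero_or_pos with rfl | hn
  · rw [Subsingleton.elim (hessianMatrix p x) 1]
    exact PosDef.one
  · rw [hHp, two_mul, add_smul, ← add_assoc]
    exact .posSemidef_add hpsd (PosDef.one.smul (by positivity))

/-- If `f` is convex over the box `B` (PSD Hessian), `q` is twice continuously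
differentiable with all second partial derivatives within `δ` of those of `f` on
`B`, then `p x = q x + n δ ‖x‖²` has Hessian `⪰ n δ I ≻ 0` on `B`; in particular `p`
is convex over `B`. -/
theorem perturbed_approximation_is_convex
    (n : ℕ) (l u : Fin n → ℝ) (hlu : ∀ i, l i < u i)
    (B : Set (Fin n → ℝ)) (hB : B = {x | ∀ i, l i ≤ x i ∧ x i ≤ u i})
    (f q : (Fin n → ℝ) → ℝ)
    (U : Set (Fin n → ℝ)) (hUopen : IsOpen U) (hBU : B ⊆ U)
    (hf : ContDiffOn ℝ 2 f U) (hq : ContDiffOn ℝ 2 q U)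
    (hfconv : ∀ x ∈ B,
      (Matrix.of fun i j => partialDeriv i (partialDeriv j f) x).PosSemidef)
    (δ : ℝ) (hδ : 0 < δ)
    (hclose : ∀ x ∈ B, ∀ i j,
      |partialDeriv i (partialDeriv j f) x - partialDeriv i (partialDeriv j q) x| ≤ δ)
    (p : (Fin n → ℝ) → ℝ)
    (hp : ∀ x, p x = q x + n * δ * ∑ i, (x i) ^ 2) :
    ∀ x ∈ B,
      ((Matrix.of fun i j => partialDeriv i (partialDeriv j p) x) -
        ((n : ℝ) * δ) • (1 : Matrix (Fin n) (Fin n) ℝ)).PosSemidef ∧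
      (Matrix.of fun i j => partialDeriv i (partialDeriv j p) x).PosDef :=
  perturbed_approximation_is_convex_general n B f q U hUopen hBU hq hfconv δ hδ hclose p hp
end

section
/- Let G be an unweighted undirected graph on n vertices with no self-loops, with adjacency matrix A (so A is a symmetric n×n matrix with entries in {0,1} and zero diagonal), let γ = max_i Σ_j A_{ij} be the maximum degree, let e ∈ ℝ^n be the all-ones vector, and let k be a real number. Then the following are equivalent: (a) (1/4)(eᵀAe − xᵀAx) ≤ k for every x ∈ {−1,1}^n (i.e., every cut of G has size at most k); (b) (1/4)xᵀ(A − γI)x + k + nγ/4 − (1/4)eᵀAe ≥ 0 for every x ∈ [−1,1]^n. -/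
open Matrix

/-- One-variable step: a quadratic form with nonpositive diagonal, as a function of
one coordinate on `[-1,1]`, is minimized at an endpoint. -/
lemma maxcut_step (n : ℕ) (M : Matrix (Fin n) (Fin n) ℝ) (i : Fin n) (hMii : M i i ≤ 0)
    (x : Fin n → ℝ) (t : ℝ) (ht : -1 ≤ t) (ht' : t ≤ 1) :
    min ((Function.update x i 1) ⬝ᵥ M.mulVec (Function.update x i 1))
        ((Function.update x i (-1)) ⬝ᵥ M.mulVec (Function.update x i (-1)))
      ≤ (Function.update x i t) ⬝ᵥ M.mulVec (Function.update x i t) := by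
  classical
  set z : Fin n → ℝ := Function.update x i 0 with hz
  set u : Fin n → ℝ := Pi.single i 1 with hu
  have hdecomp : ∀ s : ℝ, Function.update x i s = z + s • u := by
    intro s; funext j
    by_cases hji : j = i
    · subst hji; simp [hz, hu]
    · simp [hz, hu, Function.update_apply, hji, Pi.single_apply]
  have huu : u ⬝ᵥ M.mulVec u = M i i := by
    simp [hu, Matrix.mulVec_single, dotProduct, Pi.single_apply]
  set q0 : ℝ := z ⬝ᵥ M.mulVec z with hq0
  set q1 : ℝ := z ⬝ᵥ M.mulVec u + u ⬝ᵥ M.mulVec z with hq1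
  have hQ : ∀ s : ℝ, (Function.update x i s) ⬝ᵥ M.mulVec (Function.update x i s)
      = q0 + q1 * s + M i i * s ^ 2 := by
    intro s
    rw [hdecomp s]
    simp only [Matrix.mulVec_add, Matrix.mulVec_smul, add_dotProduct, dotProduct_add,
      dotProduct_smul, smul_dotProduct, smul_eq_mul]
    rw [← huu]; ring
  rw [hQ t, hQ 1, hQ (-1)]
  have ht2 : t ^ 2 - 1 ≤ 0 := by nlinarith
  have hsq : M i i * (t ^ 2 - 1) ≥ 0 := by nlinarith [mul_nonneg (neg_nonneg.2 hMii) (neg_nonneg.2 ht2)]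
  rcases le_total q1 0 with h | h
  · refine le_trans (min_le_left _ _) ?_
    nlinarith
  · refine le_trans (min_le_right _ _) ?_
    nlinarith

/-- A quadratic form with nonpositive diagonal attains its minimum over the box
at a vertex. -/
lemma maxcut_key (n : ℕ) (M : Matrix (Fin n) (Fin n) ℝ) (hd : ∀ i, M i i ≤ 0)
    (x : Fin n → ℝ) (hx : ∀ i, -1 ≤ x i ∧ x i ≤ 1) :
    ∃ y : Fin n → ℝ, (∀ i, y i = 1 ∨ y i = -1) ∧
      y ⬝ᵥ M.mulVec y ≤ x ⬝ᵥ M.mulVec x := by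
  classical
  generalize hc : (Finset.univ.filter (fun i => ¬ (x i = 1 ∨ x i = -1))).card = m
  induction m generalizing x with
  | zero =>
    have hempty := Finset.card_eq_zero.mp hc
    refine ⟨x, ?_, le_refl _⟩
    intro i
    by_contra hcon
    have hmem : i ∈ Finset.univ.filter (fun i => ¬ (x i = 1 ∨ x i = -1)) :=
      Finset.mem_filter.mpr ⟨Finset.mem_univ i, hcon⟩
    rw [hempty] at hmem
    exact absurd hmem (Finset.notMem_empty i)
  | succ m ih =>
    have hne : (Finset.univ.filter (fun i => ¬ (x i = 1 ∨ x i = -1))).Nonempty := by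
      rw [← Finset.card_pos, hc]; omega
    obtain ⟨i, hi⟩ := hne
    have hxi := hx i
    have hmin := maxcut_step n M i (hd i) x (x i) hxi.1 hxi.2
    rw [Function.update_eq_self] at hmin
    -- choose the better endpoint
    set s : ℝ := if (Function.update x i 1) ⬝ᵥ M.mulVec (Function.update x i 1) ≤
        (Function.update x i (-1)) ⬝ᵥ M.mulVec (Function.update x i (-1)) then 1 else -1 with hs
    set x₁ := Function.update x i s with hx₁
    have hs1 : s = 1 ∨ s = -1 := by
      rw [hs]; split <;> simp
    have hq1 : x₁ ⬝ᵥ M.mulVec x₁ ≤ x ⬝ᵥ M.mulVec x := by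
      refine le_trans ?_ hmin
      rw [hx₁, hs]
      split_ifs with h
      · exact le_min (le_refl _) h
      · exact le_min (le_of_not_ge h) (le_refl _)
    have hbox : ∀ j, -1 ≤ x₁ j ∧ x₁ j ≤ 1 := by
      intro j
      rw [hx₁, Function.update_apply]
      split
      · rcases hs1 with h | h <;> rw [h] <;> norm_num
      · exact hx j
    have hfilt : (Finset.univ.filter (fun j => ¬ (x₁ j = 1 ∨ x₁ j = -1)))
        = (Finset.univ.filter (fun j => ¬ (x j = 1 ∨ x j = -1))).erase i := by
      ext j
      simp only [Finset.mem_filter, Finset.mem_univ, true_and, Finset.mem_erase]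
      constructor
      · intro hj
        have hji : j ≠ i := by
          intro h; subst h
          rw [hx₁, Function.update_self] at hj
          exact hj hs1
        rw [hx₁, Function.update_apply, if_neg hji] at hj
        exact ⟨hji, hj⟩
      · intro ⟨hji, hj⟩
        rw [hx₁, Function.update_apply, if_neg hji]
        exact hj
    have hcard : (Finset.univ.filter (fun j => ¬ (x₁ j = 1 ∨ x₁ j = -1))).card = m := by
      rw [hfilt, Finset.card_erase_of_mem hi, hc]
      omega
    obtain ⟨y, hy1, hy2⟩ := ih x₁ hbox hcard
    exact ⟨y, hy1, le_trans hy2 hq1⟩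

/-- For a graph with adjacency matrix `A`, maximum degree `γ` and all-ones vector
`e`, every cut has size at most `k` (i.e. `(1/4)(eᵀAe − xᵀAx) ≤ k` on `{−1,1}ⁿ`)
if and only if `(1/4)xᵀ(A − γI)x + k + nγ/4 − (1/4)eᵀAe ≥ 0` on `[−1,1]ⁿ`. -/
theorem maxcut_iff_nonneg_on_box
    (n : ℕ) (A : Matrix (Fin n) (Fin n) ℝ) (hsymm : A.IsSymm)
    (h01 : ∀ i j, A i j = 0 ∨ A i j = 1) (hdiag : ∀ i, A i i = 0)
    (γ : ℝ) (hub : ∀ i, ∑ j, A i j ≤ γ) (hmem : ∃ i, ∑ j, A i j = γ)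
    (e : Fin n → ℝ) (he : e = fun _ => 1) (k : ℝ) :
    (∀ x : Fin n → ℝ, (∀ i, x i = 1 ∨ x i = -1) →
      (1 / 4) * (e ⬝ᵥ A.mulVec e - x ⬝ᵥ A.mulVec x) ≤ k) ↔
    (∀ x : Fin n → ℝ, (∀ i, -1 ≤ x i ∧ x i ≤ 1) →
      0 ≤ (1 / 4) * (x ⬝ᵥ (A - γ • (1 : Matrix (Fin n) (Fin n) ℝ)).mulVec x) +
        k + n * γ / 4 - (1 / 4) * (e ⬝ᵥ A.mulVec e)) := by

  have hγ : 0 ≤ γ := by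
    obtain ⟨i, hi⟩ := hmem
    rw [← hi]
    exact Finset.sum_nonneg fun j _ => by rcases h01 i j with h | h <;> rw [h] <;> norm_num
  have hM : ∀ v : Fin n → ℝ,
      v ⬝ᵥ (A - γ • (1 : Matrix (Fin n) (Fin n) ℝ)).mulVec v
        = v ⬝ᵥ A.mulVec v - γ * (v ⬝ᵥ v) := by
    intro v
    rw [Matrix.sub_mulVec, dotProduct_sub, Matrix.smul_mulVec, Matrix.one_mulVec,
      dotProduct_smul, smul_eq_mul]
  have hvert : ∀ v : Fin n → ℝ, (∀ i, v i = 1 ∨ v i = -1) → v ⬝ᵥ v = n := by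
    intro v hv
    have : ∀ i ∈ Finset.univ, v i * v i = 1 := by
      intro i _; rcases hv i with h | h <;> rw [h] <;> norm_num
    rw [dotProduct, Finset.sum_congr rfl this]
    simp
  constructor
  · intro h x hx
    have hdM : ∀ i, (A - γ • (1 : Matrix (Fin n) (Fin n) ℝ)) i i ≤ 0 := by
      intro i
      simp [Matrix.sub_apply, hdiag i, Matrix.one_apply, hγ]
    obtain ⟨y, hy1, hy2⟩ := maxcut_key n (A - γ • 1) hdM x hx
    have h1 := h y hy1
    have h2 := hM y
    have h3 := hM x
    rw [hvert y hy1] at h2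
    linarith
  · intro h x hx
    have hbox : ∀ i, -1 ≤ x i ∧ x i ≤ 1 := by
      intro i; rcases hx i with h' | h' <;> rw [h'] <;> norm_num
    have h1 := h x hbox
    have h2 := hM x
    rw [hvert x hx] at h2
    linarith
end

section
/- Let G be an unweighted undirected graph on n vertices with no self-loops and adjacency matrix A, let γ = max_i Σ_j A_{ij}, let e be the all-ones vector, let k ≥ 0, and define the cubic polynomial p(x_1, …, x_n) = Σ_{j=2}^n (x_1² A_{1j} x_j)/4 + (x_1/2)·Σ_{1<i<j≤n} x_i A_{ij} x_j − γx_1³/12 − (γx_1/4)·Σ_{i=2}^n x_i² + x_1·(k + nγ/4 − eᵀAe/4). Set K_1^- = 0, K_1^+ = n² + k, and K_i^- = −n, K_i^+ = n + 1 for i = 2, …, n. Then p has K-bounded derivatives over the box [−1,1]^n (i.e., K_i^- ≤ ∂p(x)/∂x_i ≤ K_i^+ for all x ∈ [−1,1]^n and all i) if and only if every cut of G has size at most k, i.e., if and only if (1/4)(eᵀAe − xᵀAx) ≤ k for every x ∈ {−1,1}^n. -/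
open Matrix MvPolynomial Finset

/-! ### Auxiliary definitions and lemmas -/

/-- The quadratic form `∑ i j, A i j * x i * x j`. -/
noncomputable def MCaux.Tq {n : ℕ} (A : Matrix (Fin n) (Fin n) ℝ) (x : Fin n → ℝ) : ℝ :=
  ∑ i, ∑ j, A i j * x i * x j

/-- The function `(1/4)·xᵀAx − (γ/4)·∑ xᵢ²`. -/
noncomputable def MCaux.Qq {n : ℕ} (A : Matrix (Fin n) (Fin n) ℝ) (γ : ℝ)
    (x : Fin n → ℝ) : ℝ :=
  (1/4) * MCaux.Tq A x - (γ/4) * ∑ i, (x i)^2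

namespace MCaux

variable {n : ℕ}

lemma evalD0 (n : ℕ) (A : Matrix (Fin n) (Fin n) ℝ)
    (γ k : ℝ) (i0 : Fin n) (x : Fin n → ℝ) :
    eval x (pderiv i0 (C (1 / 4 : ℝ) * (X i0) ^ 2 *
          (∑ j ∈ Finset.univ.erase i0, C (A i0 j) * X j)
        + C (1 / 2 : ℝ) * X i0 *
          (∑ i ∈ Finset.univ.erase i0, ∑ j ∈ Finset.univ.erase i0,
            if i < j then C (A i j) * X i * X j else 0)
        - C (γ / 12) * (X i0) ^ 3
        - C (γ / 4) * X i0 * (∑ i ∈ Finset.univ.erase i0, (X i) ^ 2)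
        + C (k + n * γ / 4 - (∑ i, ∑ j, A i j) / 4) * X i0)) =
    (1/2) * x i0 * (∑ j ∈ Finset.univ.erase i0, A i0 j * x j)
    + (1/2) * (∑ i ∈ Finset.univ.erase i0, ∑ j ∈ Finset.univ.erase i0,
        if i < j then A i j * x i * x j else 0)
    - (γ/4) * (x i0)^2 - (γ/4) * (∑ i ∈ Finset.univ.erase i0, (x i)^2)
    + (k + n * γ / 4 - (∑ i, ∑ j, A i j) / 4) := by
  simp only [map_add, map_sub, pderiv_mul, pderiv_C, pderiv_X, pderiv_pow, map_sum,
    apply_ite (pderiv i0), map_zero, eval_add, eval_sub, eval_mul, eval_pow, eval_C, eval_X,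
    eval_zero, _root_.map_mul, Pi.single_apply, apply_ite (eval x), _root_.map_one, if_true,
    map_natCast, mul_one, mul_zero, zero_mul, add_zero, zero_add, if_pos rfl]
  have h1 : ∀ j ∈ Finset.univ.erase i0,
      (A i0 j * if j = i0 then (1:ℝ) else 0) = 0 := by
    intro j hj; rw [if_neg (Finset.mem_erase.1 hj).1, mul_zero]
  have h2 : ∀ i ∈ Finset.univ.erase i0, ∀ j ∈ Finset.univ.erase i0,
      (if i < j then (A i j * if i = i0 then (1:ℝ) else 0) * x j
          + A i j * x i * (if j = i0 then (1:ℝ) else 0) else 0) = 0 := by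
    intro i hi j hj
    rw [if_neg (Finset.mem_erase.1 hi).1, if_neg (Finset.mem_erase.1 hj).1]
    split <;> ring
  have h4 : ∀ i ∈ Finset.univ.erase i0,
      ((↑(2:ℕ):ℝ) * x i ^ (2-1) * if i = i0 then (1:ℝ) else 0) = 0 := by
    intro i hi; rw [if_neg (Finset.mem_erase.1 hi).1, mul_zero]
  rw [Finset.sum_eq_zero h1, Finset.sum_eq_zero h4,
    Finset.sum_congr rfl (fun i hi => Finset.sum_eq_zero (h2 i hi)),
    Finset.sum_eq_zero (fun i (_ : i ∈ Finset.univ.erase i0) => rfl)]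
  push_cast
  ring

lemma evalDm (n : ℕ) (A : Matrix (Fin n) (Fin n) ℝ) (hsymm : A.IsSymm)
    (γ k : ℝ) (i0 m : Fin n) (hm : m ≠ i0) (x : Fin n → ℝ) :
    eval x (pderiv m (C (1 / 4 : ℝ) * (X i0) ^ 2 *
          (∑ j ∈ Finset.univ.erase i0, C (A i0 j) * X j)
        + C (1 / 2 : ℝ) * X i0 *
          (∑ i ∈ Finset.univ.erase i0, ∑ j ∈ Finset.univ.erase i0,
            if i < j then C (A i j) * X i * X j else 0)
        - C (γ / 12) * (X i0) ^ 3
        - C (γ / 4) * X i0 * (∑ i ∈ Finset.univ.erase i0, (X i) ^ 2)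
        + C (k + n * γ / 4 - (∑ i, ∑ j, A i j) / 4) * X i0)) =
    (1/4) * (x i0)^2 * A i0 m
    + (1/2) * x i0 * (∑ i ∈ Finset.univ.erase i0, if i ≠ m then A m i * x i else 0)
    - (γ/2) * x i0 * x m := by
  have hmE : m ∈ Finset.univ.erase i0 := Finset.mem_erase.2 ⟨hm, Finset.mem_univ m⟩
  simp only [map_add, map_sub, pderiv_mul, pderiv_C, pderiv_X, pderiv_pow, map_sum,
    apply_ite (pderiv m), map_zero, eval_add, eval_sub, eval_mul, eval_pow, eval_C, eval_X,
    eval_zero, _root_.map_mul, Pi.single_apply, apply_ite (eval x), _root_.map_one, if_true,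
    map_natCast, mul_one, mul_zero, zero_mul, add_zero, zero_add, if_neg (Ne.symm hm)]
  have h1 : (∑ j ∈ Finset.univ.erase i0, A i0 j * if j = m then (1:ℝ) else 0) = A i0 m := by
    simp only [mul_ite, mul_one, mul_zero]
    rw [Finset.sum_ite_eq' (Finset.univ.erase i0) m (fun j => A i0 j), if_pos hmE]
  have h2 : (∑ i ∈ Finset.univ.erase i0, ∑ j ∈ Finset.univ.erase i0,
      (if i < j then (A i j * if i = m then (1:ℝ) else 0) * x j
          + A i j * x i * (if j = m then (1:ℝ) else 0) else 0)) =
      ∑ i ∈ Finset.univ.erase i0, if i ≠ m then A m i * x i else 0 := by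
    have step : ∀ i ∈ Finset.univ.erase i0, ∀ j ∈ Finset.univ.erase i0,
        (if i < j then (A i j * if i = m then (1:ℝ) else 0) * x j
            + A i j * x i * (if j = m then (1:ℝ) else 0) else 0)
        = (if i = m then (if i < j then A i j * x j else 0) else 0)
          + (if j = m then (if i < j then A i j * x i else 0) else 0) := by
      intro i _ j _
      rcases eq_or_ne i m with h | h <;> rcases eq_or_ne j m with h' | h' <;>
        simp [h, h'] <;> split <;> ring
    rw [Finset.sum_congr rfl (fun i hi => Finset.sum_congr rfl (step i hi))]
    rw [Finset.sum_congr rfl (fun i hi => Finset.sum_add_distrib)]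
    rw [Finset.sum_add_distrib]
    have e1 : ∀ i ∈ Finset.univ.erase i0,
        (∑ j ∈ Finset.univ.erase i0, if i = m then (if i < j then A i j * x j else 0) else 0)
        = if i = m then (∑ j ∈ Finset.univ.erase i0, if m < j then A m j * x j else 0) else 0 := by
      intro i _
      split_ifs with h
      · subst h; rfl
      · exact Finset.sum_const_zero
    rw [Finset.sum_congr rfl e1,
      Finset.sum_ite_eq' (Finset.univ.erase i0) m
        (fun _ => (∑ j ∈ Finset.univ.erase i0, if m < j then A m j * x j else 0)), if_pos hmE]
    have e2 : ∀ i ∈ Finset.univ.erase i0,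
        (∑ j ∈ Finset.univ.erase i0, if j = m then (if i < j then A i j * x i else 0) else 0)
        = if i < m then A i m * x i else 0 := by
      intro i _
      rw [Finset.sum_ite_eq' (Finset.univ.erase i0) m (fun j => if i < j then A i j * x i else 0),
        if_pos hmE]
    rw [Finset.sum_congr rfl e2, ← Finset.sum_add_distrib]
    refine Finset.sum_congr rfl (fun i _ => ?_)
    have hAsym : A i m = A m i := hsymm.apply m i
    rcases lt_trichotomy i m with h | h | h
    · rw [if_neg (not_lt.2 h.le), if_pos h, if_pos h.ne, zero_add, hAsym]
    · simp [h]
    · rw [if_pos h, if_neg (not_lt.2 h.le), if_pos h.ne', add_zero]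
  have h4 : (∑ i ∈ Finset.univ.erase i0,
      (↑(2:ℕ):ℝ) * x i ^ (2-1) * if i = m then (1:ℝ) else 0) = 2 * x m := by
    simp only [mul_ite, mul_one, mul_zero]
    rw [Finset.sum_ite_eq' (Finset.univ.erase i0) m
      (fun i => (↑(2:ℕ):ℝ) * x i ^ (2-1)), if_pos hmE]
    norm_num
  rw [h1, h2, h4]
  push_cast
  ring

lemma quad_update (A : Matrix (Fin n) (Fin n) ℝ) (γ : ℝ) (hsymm : A.IsSymm)
    (hdiag : ∀ i, A i i = 0) (y : Fin n → ℝ) (a : Fin n) (t : ℝ) :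
    Qq A γ (Function.update y a t) = -(γ/4) * t^2
      + ((1/2) * ∑ j ∈ univ.erase a, A a j * y j) * t
      + ((1/4) * ∑ i ∈ univ.erase a, ∑ j ∈ univ.erase a, A i j * y i * y j
         - (γ/4) * ∑ i ∈ univ.erase a, (y i)^2) := by
  have hup : ∀ j ∈ univ.erase a, Function.update y a t j = y j := fun j hj =>
    Function.update_of_ne (Finset.mem_erase.1 hj).1 _ _
  have hT : Tq A (Function.update y a t) =
      2 * t * (∑ j ∈ univ.erase a, A a j * y j)
      + ∑ i ∈ univ.erase a, ∑ j ∈ univ.erase a, A i j * y i * y j := by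
    unfold Tq
    rw [← Finset.add_sum_erase _ _ (mem_univ a)]
    have inner : ∀ i ∈ univ.erase a,
        (∑ j, A i j * Function.update y a t i * Function.update y a t j)
        = A i a * y i * t + ∑ j ∈ univ.erase a, A i j * y i * y j := by
      intro i hi
      rw [← Finset.add_sum_erase _ _ (mem_univ a), hup i hi, Function.update_self]
      exact congrArg (A i a * y i * t + ·)
        (Finset.sum_congr rfl fun j hj => by rw [hup j hj])
    rw [Finset.sum_congr rfl inner, Finset.sum_add_distrib]
    rw [← Finset.add_sum_erase _ _ (mem_univ a), Function.update_self, hdiag a]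
    have e1 : (∑ j ∈ univ.erase a, A a j * t * Function.update y a t j)
        = t * ∑ j ∈ univ.erase a, A a j * y j := by
      rw [Finset.mul_sum]
      exact Finset.sum_congr rfl fun j hj => by
        rw [hup j hj]; ring
    have e2 : (∑ i ∈ univ.erase a, A i a * y i * t) = t * ∑ j ∈ univ.erase a, A a j * y j := by
      rw [Finset.mul_sum]
      refine Finset.sum_congr rfl fun j hj => ?_
      rw [hsymm.apply a j]; ring
    rw [e1, e2]; ring
  have hS : (∑ i, (Function.update y a t i)^2) = t^2 + ∑ i ∈ univ.erase a, (y i)^2 := by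
    rw [← Finset.add_sum_erase _ _ (mem_univ a), Function.update_self]
    exact congrArg (t^2 + ·) (Finset.sum_congr rfl fun j hj => by rw [hup j hj])
  unfold Qq
  rw [hT, hS]; ring

lemma exists_pm (A : Matrix (Fin n) (Fin n) ℝ) (γ : ℝ) (hsymm : A.IsSymm)
    (hdiag : ∀ i, A i i = 0) (hγ : 0 ≤ γ)
    (y : Fin n → ℝ) (a : Fin n) (ha : -1 ≤ y a ∧ y a ≤ 1) :
    ∃ t : ℝ, (t = 1 ∨ t = -1) ∧ Qq A γ (Function.update y a t) ≤ Qq A γ y := by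
  have hy : Qq A γ y = Qq A γ (Function.update y a (y a)) := by
    rw [Function.update_eq_self]
  set b := ((1/2) * ∑ j ∈ univ.erase a, A a j * y j) with hb
  set c := ((1/4) * ∑ i ∈ univ.erase a, ∑ j ∈ univ.erase a, A i j * y i * y j
         - (γ/4) * ∑ i ∈ univ.erase a, (y i)^2) with hc
  have hq := quad_update A γ hsymm hdiag y a
  rcases le_total b 0 with hb0 | hb0
  · refine ⟨1, Or.inl rfl, ?_⟩
    rw [hy, hq, hq]
    nlinarith [ha.1, ha.2, sq_nonneg (y a),
      mul_nonneg hγ (mul_nonneg (sub_nonneg.2 ha.2) (by linarith : (0:ℝ) ≤ 1 + y a))]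
  · refine ⟨-1, Or.inr rfl, ?_⟩
    rw [hy, hq, hq]
    nlinarith [ha.1, ha.2,
      mul_nonneg hγ (mul_nonneg (sub_nonneg.2 ha.2) (by linarith : (0:ℝ) ≤ 1 + y a))]

lemma vertex_min (A : Matrix (Fin n) (Fin n) ℝ) (γ : ℝ) (hsymm : A.IsSymm)
    (hdiag : ∀ i, A i i = 0) (hγ : 0 ≤ γ) :
    ∀ s : Finset (Fin n), ∀ x : Fin n → ℝ, (∀ i, -1 ≤ x i ∧ x i ≤ 1) →
      ∃ y : Fin n → ℝ, (∀ i, -1 ≤ y i ∧ y i ≤ 1) ∧ (∀ i ∈ s, y i = 1 ∨ y i = -1) ∧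
        Qq A γ y ≤ Qq A γ x := by
  intro s
  induction s using Finset.induction_on with
  | empty => exact fun x hx => ⟨x, hx, by simp, le_refl _⟩
  | @insert a s ha ih =>
    intro x hx
    obtain ⟨y, hybox, hys, hyle⟩ := ih x hx
    obtain ⟨t, ht, hle⟩ := exists_pm A γ hsymm hdiag hγ y a (hybox a)
    refine ⟨Function.update y a t, ?_, ?_, le_trans hle hyle⟩
    · intro i
      rcases eq_or_ne i a with rfl | hne
      · rw [Function.update_self]; rcases ht with rfl | rfl <;> norm_num
      · rw [Function.update_of_ne hne]; exact hybox i
    · intro i hi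
      rcases eq_or_ne i a with rfl | hne
      · rw [Function.update_self]; exact ht
      · rw [Function.update_of_ne hne]
        exact hys i ((Finset.mem_insert.1 hi).resolve_left hne)

lemma pair_split (hn : 0 < n) (A : Matrix (Fin n) (Fin n) ℝ) (hsymm : A.IsSymm)
    (hdiag : ∀ i, A i i = 0) (i0 : Fin n) (hi0 : i0 = ⟨0, hn⟩) (x : Fin n → ℝ) :
    (∑ i, ∑ j, A i j * x i * x j) =
    2 * (x i0 * (∑ j ∈ univ.erase i0, A i0 j * x j)
      + ∑ i ∈ univ.erase i0, ∑ j ∈ univ.erase i0,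
          if i < j then A i j * x i * x j else 0) := by
  have hlt : ∀ j : Fin n, i0 < j ↔ j ≠ i0 := by
    intro j
    subst hi0
    constructor
    · intro h he; rw [he] at h; exact lt_irrefl _ h
    · intro h
      have hv : j.val ≠ 0 := fun hv => h (Fin.ext hv)
      exact Fin.lt_def.2 (Nat.pos_of_ne_zero hv)
  have step1 : (∑ i, ∑ j, A i j * x i * x j)
      = 2 * ∑ i, ∑ j, (if i < j then A i j * x i * x j else 0) := by
    have swap : (∑ i, ∑ j, (if j < i then A i j * x i * x j else 0))
        = ∑ i, ∑ j, (if i < j then A i j * x i * x j else 0) := by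
      rw [Finset.sum_comm]
      refine Finset.sum_congr rfl fun i _ => Finset.sum_congr rfl fun j _ => ?_
      rw [hsymm.apply i j]
      split <;> ring
    have per : ∀ i j : Fin n, A i j * x i * x j =
        (if i < j then A i j * x i * x j else 0) + (if j < i then A i j * x i * x j else 0) := by
      intro i j
      rcases lt_trichotomy i j with h | h | h
      · rw [if_pos h, if_neg (not_lt.2 h.le), add_zero]
      · subst h; rw [hdiag i]; simp
      · rw [if_neg (not_lt.2 h.le), if_pos h, zero_add]
    calc (∑ i, ∑ j, A i j * x i * x j)
        = ∑ i, ∑ j, ((if i < j then A i j * x i * x j else 0)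
            + (if j < i then A i j * x i * x j else 0)) := by
          exact Finset.sum_congr rfl fun i _ => Finset.sum_congr rfl fun j _ => per i j
      _ = (∑ i, ∑ j, (if i < j then A i j * x i * x j else 0))
            + ∑ i, ∑ j, (if j < i then A i j * x i * x j else 0) := by
          rw [← Finset.sum_add_distrib]
          exact Finset.sum_congr rfl fun i _ => Finset.sum_add_distrib
      _ = 2 * ∑ i, ∑ j, (if i < j then A i j * x i * x j else 0) := by rw [swap]; ring
  rw [step1]
  congr 1
  rw [← Finset.add_sum_erase _ _ (mem_univ i0)]
  congr 1
  · rw [Finset.mul_sum, ← Finset.sum_erase (s := univ) (a := i0)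
      (f := fun j => if i0 < j then A i0 j * x i0 * x j else 0) (if_neg (lt_irrefl i0))]
    refine Finset.sum_congr rfl fun j hj => ?_
    rw [if_pos ((hlt j).2 (Finset.mem_erase.1 hj).1)]
    ring
  · refine Finset.sum_congr rfl fun i hi => ?_
    have hni : ¬ i < i0 := by
      subst hi0; exact fun h => Nat.not_lt_zero _ (Fin.lt_def.1 h)
    rw [← Finset.sum_erase (s := univ) (a := i0)
      (f := fun j => if i < j then A i j * x i * x j else 0) (if_neg hni)]

lemma Tdot (A : Matrix (Fin n) (Fin n) ℝ) (x : Fin n → ℝ) :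
    x ⬝ᵥ A.mulVec x = Tq A x := by
  simp only [Tq, dotProduct, Matrix.mulVec, dotProduct, Finset.mul_sum]
  exact Finset.sum_congr rfl fun i _ => Finset.sum_congr rfl fun j _ => by ring

end MCaux

/-- The cubic MAX-CUT polynomial `p` has `K`-bounded derivatives over `[−1,1]ⁿ`
(with `K₁⁻ = 0`, `K₁⁺ = n² + k`, and `K_i⁻ = −n`, `K_i⁺ = n + 1` for `i ≥ 2`) if and
only if every cut of the graph has size at most `k`. -/
theorem maxcut_iff_K_bounded_derivatives
    (n : ℕ) (hn : 0 < n) (A : Matrix (Fin n) (Fin n) ℝ) (hsymm : A.IsSymm)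
    (h01 : ∀ i j, A i j = 0 ∨ A i j = 1) (hdiag : ∀ i, A i i = 0)
    (γ : ℝ) (hub : ∀ i, ∑ j, A i j ≤ γ) (hmem : ∃ i, ∑ j, A i j = γ)
    (k : ℝ) (hk : 0 ≤ k)
    (i0 : Fin n) (hi0 : i0 = ⟨0, hn⟩)
    (p : MvPolynomial (Fin n) ℝ)
    (hp : p = C (1 / 4 : ℝ) * (X i0) ^ 2 *
          (∑ j ∈ Finset.univ.erase i0, C (A i0 j) * X j)
        + C (1 / 2 : ℝ) * X i0 *
          (∑ i ∈ Finset.univ.erase i0, ∑ j ∈ Finset.univ.erase i0,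
            if i < j then C (A i j) * X i * X j else 0)
        - C (γ / 12) * (X i0) ^ 3
        - C (γ / 4) * X i0 * (∑ i ∈ Finset.univ.erase i0, (X i) ^ 2)
        + C (k + n * γ / 4 - (∑ i, ∑ j, A i j) / 4) * X i0)
    (Km Kp : Fin n → ℝ)
    (hKm : Km = fun i => if i = i0 then 0 else -(n : ℝ))
    (hKp : Kp = fun i => if i = i0 then (n : ℝ) ^ 2 + k else (n : ℝ) + 1) :
    (∀ x : Fin n → ℝ, (∀ i, -1 ≤ x i ∧ x i ≤ 1) →
        ∀ i, Km i ≤ eval x (pderiv i p) ∧ eval x (pderiv i p) ≤ Kp i) ↔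
      (∀ x : Fin n → ℝ, (∀ i, x i = 1 ∨ x i = -1) →
        (1 / 4) * ((∑ i, ∑ j, A i j) - x ⬝ᵥ A.mulVec x) ≤ k) := by
  have hA0 : ∀ i j, 0 ≤ A i j := fun i j => by
    rcases h01 i j with h | h <;> rw [h] <;> norm_num
  have hA1 : ∀ i j, A i j ≤ 1 := fun i j => by
    rcases h01 i j with h | h <;> rw [h] <;> norm_num
  obtain ⟨iγ, hγeq⟩ := hmem
  have hγ0 : 0 ≤ γ := hγeq ▸ Finset.sum_nonneg fun j _ => hA0 iγ j
  have hn1 : (1:ℝ) ≤ n := by exact_mod_cast hn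
  have hγn : γ ≤ (n:ℝ) - 1 := by
    rw [← hγeq, ← Finset.sum_erase (s := Finset.univ) (a := iγ)
      (f := fun j => A iγ j) (hdiag iγ)]
    calc (∑ j ∈ Finset.univ.erase iγ, A iγ j) ≤ ∑ _j ∈ Finset.univ.erase iγ, (1:ℝ) :=
          Finset.sum_le_sum (fun j _ => hA1 iγ j)
      _ = (n:ℝ) - 1 := by
          rw [Finset.sum_const, Finset.card_erase_of_mem (Finset.mem_univ _),
            Finset.card_univ, Fintype.card_fin, nsmul_eq_mul, mul_one,
            Nat.cast_sub hn]
          norm_num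
  have hS0 : 0 ≤ ∑ i, ∑ j, A i j :=
    Finset.sum_nonneg fun i _ => Finset.sum_nonneg fun j _ => hA0 i j
  -- closed form of the partial derivative at i0
  have hD0 : ∀ x : Fin n → ℝ, eval x (pderiv i0 p) =
      (1/4) * MCaux.Tq A x - (γ/4) * (∑ i, (x i)^2)
        + (k + n * γ / 4 - (∑ i, ∑ j, A i j) / 4) := by
    intro x
    rw [hp, MCaux.evalD0 n A γ k i0 x]
    have hTq : MCaux.Tq A x =
        2 * (x i0 * (∑ j ∈ Finset.univ.erase i0, A i0 j * x j)
          + ∑ i ∈ Finset.univ.erase i0, ∑ j ∈ Finset.univ.erase i0,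
              if i < j then A i j * x i * x j else 0) :=
      MCaux.pair_split hn A hsymm hdiag i0 hi0 x
    have hsq : (∑ i, (x i)^2) = (x i0)^2 + ∑ i ∈ Finset.univ.erase i0, (x i)^2 :=
      (Finset.add_sum_erase _ _ (Finset.mem_univ i0)).symm
    rw [hTq, hsq]; ring
  -- square sum at ±1 vertices
  have hvsq : ∀ x : Fin n → ℝ, (∀ i, x i = 1 ∨ x i = -1) → (∑ i, (x i)^2) = (n:ℝ) := by
    intro x hx
    have : ∀ i ∈ Finset.univ, (x i)^2 = (1:ℝ) := fun i _ => by
      rcases hx i with h | h <;> rw [h] <;> norm_num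
    rw [Finset.sum_congr rfl this, Finset.sum_const, Finset.card_univ, Fintype.card_fin,
      nsmul_eq_mul, mul_one]
  constructor
  · -- bounded derivatives → all cuts ≤ k
    intro H x hx
    have hbox : ∀ i, -1 ≤ x i ∧ x i ≤ 1 := fun i => by
      rcases hx i with h | h <;> rw [h] <;> norm_num
    have h0 := (H x hbox i0).1
    rw [hD0 x] at h0
    rw [hKm] at h0
    simp only [eq_self_iff_true, if_true] at h0
    rw [hvsq x hx] at h0
    rw [MCaux.Tdot A x]
    ring_nf at h0 ⊢
    linarith
  · -- all cuts ≤ k → bounded derivatives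
    intro H x hbox i
    rcases eq_or_ne i i0 with rfl | hne
    · rw [hD0 x, hKm, hKp]
      simp only [eq_self_iff_true, if_true]
      constructor
      · -- lower bound 0
        obtain ⟨y, hybox, hypm, hyle⟩ :=
          MCaux.vertex_min A γ hsymm hdiag hγ0 Finset.univ x hbox
        have hypm' : ∀ i, y i = 1 ∨ y i = -1 := fun i => hypm i (Finset.mem_univ i)
        have hcut := H y hypm'
        rw [MCaux.Tdot A y] at hcut
        have hQxy : MCaux.Qq A γ y ≤ MCaux.Qq A γ x := hyle
        have hQy : MCaux.Qq A γ y = (1/4) * MCaux.Tq A y - (γ/4) * (n:ℝ) := by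
          unfold MCaux.Qq
          rw [hvsq y hypm']
        have hQx : MCaux.Qq A γ x = (1/4) * MCaux.Tq A x - (γ/4) * (∑ i, (x i)^2) := rfl
        rw [hQy, hQx] at hQxy
        linarith
      · -- upper bound n² + k
        have hTub : MCaux.Tq A x ≤ (n:ℝ) * n := by
          unfold MCaux.Tq
          calc (∑ i, ∑ j, A i j * x i * x j) ≤ ∑ _i : Fin n, ∑ _j : Fin n, (1:ℝ) := by
                refine Finset.sum_le_sum fun i _ => Finset.sum_le_sum fun j _ => ?_
                have h1 := (hbox i).1; have h2 := (hbox i).2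
                have h3 := (hbox j).1; have h4 := (hbox j).2
                nlinarith [hA0 i j, hA1 i j, sq_nonneg (x i - x j), sq_nonneg (x i + x j)]
            _ = (n:ℝ) * n := by
                simp [Finset.sum_const, Finset.card_univ, mul_comm]
        have hsqnn : 0 ≤ ∑ i, (x i)^2 := Finset.sum_nonneg fun i _ => sq_nonneg _
        have : (γ/4) * (∑ i, (x i)^2) ≥ 0 := by positivity
        nlinarith [mul_le_mul_of_nonneg_left hγn (by positivity : (0:ℝ) ≤ (n:ℝ))]
    · rw [hp, MCaux.evalDm n A hsymm γ k i0 i hne x, hKm, hKp]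
      simp only [if_neg hne]
      set W := ∑ j ∈ Finset.univ.erase i0, (if j ≠ i then A i j * x j else 0) with hWdef
      have habs : ∀ j, |x j| ≤ 1 := fun j => abs_le.2 (hbox j)
      have hW : |W| ≤ γ := by
        calc |W| ≤ ∑ j ∈ Finset.univ.erase i0, |if j ≠ i then A i j * x j else 0| :=
              Finset.abs_sum_le_sum_abs _ _
          _ ≤ ∑ j ∈ Finset.univ.erase i0, A i j := by
              refine Finset.sum_le_sum fun j _ => ?_
              split_ifs with h
              · rw [abs_mul, abs_of_nonneg (hA0 i j)]
                calc A i j * |x j| ≤ A i j * 1 :=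
                      mul_le_mul_of_nonneg_left (habs j) (hA0 i j)
                  _ = A i j := mul_one _
              · simpa using hA0 i j
          _ ≤ ∑ j, A i j := Finset.sum_le_sum_of_subset_of_nonneg
                (Finset.erase_subset _ _) (fun j _ _ => hA0 i j)
          _ ≤ γ := hub i
      have hW1 : -γ ≤ W ∧ W ≤ γ := abs_le.1 hW
      have h0W : |x i0 * W| ≤ γ := by
        rw [abs_mul]
        calc |x i0| * |W| ≤ 1 * γ :=
              mul_le_mul (habs i0) hW (abs_nonneg _) zero_le_one
          _ = γ := one_mul _
      have h0m : |x i0 * x i| ≤ 1 := by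
        rw [abs_mul]
        exact mul_le_one₀ (habs i0) (abs_nonneg _) (habs i)
      have hsq01 : 0 ≤ (x i0)^2 ∧ (x i0)^2 ≤ 1 := by
        constructor
        · exact sq_nonneg _
        · rw [← one_pow 2]
          exact sq_le_sq' (by linarith [(hbox i0).1]) (hbox i0).2
      have hWb := abs_le.1 h0W
      have hmb := abs_le.1 h0m
      have hAb : 0 ≤ A i0 i ∧ A i0 i ≤ 1 := ⟨hA0 i0 i, hA1 i0 i⟩
      constructor
      · nlinarith [hsq01.1, hsq01.2, hAb.1, hAb.2, hWb.1, hWb.2, hmb.1, hmb.2]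
      · nlinarith [hsq01.1, hsq01.2, hAb.1, hAb.2, hWb.1, hWb.2, hmb.1, hmb.2]
end
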